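/- arXiv:1404.5100 — 5 statements merged into one kernel-verified Lean document; each statement's English description precedes it below -/
import Mathlib

section
/- The set 𝒳* of minimizers of f₁ over 𝒳 is convex, and there exists t* ∈ ℝ^m such that E x* = t* for every x* ∈ 𝒳*. -/
open Filter Topology Matrix

/-- Euclidean norm of a vector in `ℝ^k`. -/
noncomputable def enorm {k : ℕ} (v : Fin k → ℝ) : ℝ := Real.sqrt (∑ i, v i ^ 2)

/-- Soft-thresholding operator `S_λ(x) = sign(x) · max(|x| − λ, 0)`. -/
noncomputable def softThresh (lam x : ℝ) : ℝ := Real.sign x * max (|x| - lam) 0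

/-- Gradient of `gr : ℝ^m → ℝ` at `t`. -/
noncomputable def gradv {m : ℕ} (gr : (Fin m → ℝ) → ℝ) (t : Fin m → ℝ) : Fin m → ℝ :=
  fun i => fderiv ℝ gr t (Pi.single i 1)

/-- Hessian quadratic form `vᵀ (∇²gr(t)) v`. -/
noncomputable def hessQF {m : ℕ} (gr : (Fin m → ℝ) → ℝ) (t v : Fin m → ℝ) : ℝ :=
  ∑ i, ∑ j, v i * fderiv ℝ (fun s => gradv gr s j) t (Pi.single i 1) * v j

/-!
`F` is convex on the convex feasible set `K = X ∩ E⁻¹(dom g)`, so its minimizers form a convex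
set. The blow-up of `g` at the boundary makes `dom g` open: on the segment from a boundary point
to an interior point, a convex function stays below the larger endpoint value. So `E x*` lies
where `g` is strictly convex, and two minimizers with `E x ≠ E y` would have a strictly better
midpoint, since the `ℓ¹` term is convex.
-/
theorem ConvexOn.convex_setOf_isMinOn {𝕜 E β : Type*} [Semiring 𝕜] [PartialOrder 𝕜]
    [AddCommMonoid E] [SMul 𝕜 E] [AddCommMonoid β] [PartialOrder β] [IsOrderedAddMonoid β]
    [Module 𝕜 β] [PosSMulMono 𝕜 β] {s : Set E} {f : E → β} (hf : ConvexOn 𝕜 s f) :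
    Convex 𝕜 {x ∈ s | IsMinOn f s x} := by
  rcases Set.eq_empty_or_nonempty {x ∈ s | IsMinOn f s x} with h | ⟨x₀, hx₀s, hx₀⟩
  · rw [h]; exact convex_empty
  · have hsub : {x ∈ s | IsMinOn f s x} = {x ∈ s | f x ≤ f x₀} := by
      ext x
      refine and_congr_right fun _ => ⟨fun hmin => isMinOn_iff.1 hmin x₀ hx₀s, fun hle => ?_⟩
      exact isMinOn_iff.2 fun y hy => hle.trans (isMinOn_iff.1 hx₀ y hy)
    rw [hsub]
    exact hf.convex_le _

theorem ConvexOn.finset_sum {𝕜 E β ι : Type*} [Semiring 𝕜] [PartialOrder 𝕜]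
    [AddCommMonoid E] [AddCommMonoid β] [PartialOrder β] [IsOrderedAddMonoid β]
    [SMul 𝕜 E] [Module 𝕜 β] {s : Set E} {f : ι → E → β} (hs : Convex 𝕜 s)
    (t : Finset ι) (hf : ∀ i ∈ t, ConvexOn 𝕜 s (f i)) :
    ConvexOn 𝕜 s fun x => ∑ i ∈ t, f i x := by
  classical
  induction t using Finset.induction_on with
  | empty => simpa using convexOn_const (0 : β) hs
  | insert i t hi ih =>
    simp only [Finset.sum_insert hi]
    exact (hf i (t.mem_insert_self i)).add (ih fun j hj => hf j (Finset.mem_insert_of_mem hj))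

theorem convexOn_sum_abs {ι : Type*} (t : Finset ι) :
    ConvexOn ℝ Set.univ fun x : ι → ℝ => ∑ i ∈ t, |x i| :=
  ConvexOn.finset_sum convex_univ t fun i _ => by
    simpa [Function.comp_def] using (convexOn_norm (E := ℝ) convex_univ).comp_linearMap
      (LinearMap.proj (R := ℝ) (φ := fun _ : ι => ℝ) i)

theorem convex_setOf_forall_nonneg {𝕜 ι : Type*} [Field 𝕜] [LinearOrder 𝕜]
    [IsStrictOrderedRing 𝕜] (p : ι → Prop) :
    Convex 𝕜 {x : ι → 𝕜 | ∀ i, p i → 0 ≤ x i} := by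
  simp only [Set.ofPred_forall]
  exact convex_iInter₂ fun i _ => convex_halfSpace_ge (LinearMap.proj i).isLinear 0

theorem ConvexOn.mem_interior_of_tendsto_atTop {E : Type*} [AddCommGroup E] [Module ℝ E]
    [TopologicalSpace E] [IsTopologicalAddGroup E] [ContinuousSMul ℝ E]
    {s : Set E} {f : E → ℝ} (hf : ConvexOn ℝ s f) (hs : (interior s).Nonempty)
    (htop : ∀ t ∈ frontier (interior s), Tendsto f (𝓝[interior s] t) atTop)
    {t : E} (ht : t ∈ s) : t ∈ interior s := by
  by_contra ht_int
  obtain ⟨t₁, ht₁⟩ := hs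
  have hseg : openSegment ℝ t t₁ ⊆ interior s :=
    hf.1.openSegment_closure_interior_subset_interior (subset_closure ht) ht₁
  have hcl : t ∈ closure (openSegment ℝ t t₁) :=
    segment_subset_closure_openSegment (left_mem_segment ℝ t t₁)
  have hfr : t ∈ frontier (interior s) :=
    ⟨closure_mono hseg hcl, by rwa [interior_interior]⟩
  have := mem_closure_iff_nhdsWithin_neBot.1 hcl
  obtain ⟨z, hz_big, hz⟩ := (((htop t hfr).mono_left (nhdsWithin_mono t hseg)).eventually
    (eventually_gt_atTop (max (f t) (f t₁))) |>.and self_mem_nhdsWithin).exists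
  exact hz_big.not_ge <|
    hf.le_on_segment ht (interior_subset ht₁) (openSegment_subset_segment ℝ t t₁ hz)

theorem eq_of_isMinOn_comp_add_of_strictConvexOn {V W : Type*} [AddCommGroup V] [Module ℝ V]
    [AddCommGroup W] [Module ℝ W] {K : Set V} {C : Set W} {g : W → ℝ} {h : V → ℝ}
    (A : V →ₗ[ℝ] W) (hg : StrictConvexOn ℝ C g) (hh : ConvexOn ℝ K h) {x y : V}
    (hx : x ∈ K) (hy : y ∈ K) (hAx : A x ∈ C) (hAy : A y ∈ C)
    (hxmin : IsMinOn (fun z => g (A z) + h z) K x)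
    (hymin : IsMinOn (fun z => g (A z) + h z) K y) : A x = A y := by
  by_contra hne
  set z := (1 / 2 : ℝ) • x + (1 / 2 : ℝ) • y
  have hz : z ∈ K := hh.1 hx hy (by norm_num) (by norm_num) (by norm_num)
  have hgz : g (A z) < 1 / 2 * g (A x) + 1 / 2 * g (A y) := by
    simpa [z, map_add, map_smul] using hg.2 hAx hAy hne (by norm_num : (0 : ℝ) < 1 / 2)
      (by norm_num : (0 : ℝ) < 1 / 2) (by norm_num)
  have hhz : h z ≤ 1 / 2 * h x + 1 / 2 * h y :=
    hh.2 hx hy (by norm_num) (by norm_num) (by norm_num)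
  have hxz : g (A x) + h x ≤ g (A z) + h z := isMinOn_iff.1 hxmin z hz
  have hyz : g (A y) + h y ≤ g (A z) + h z := isMinOn_iff.1 hymin z hz
  linarith

theorem optimal_set_convex_and_Ex_constant_general
(m n : ℕ)
    (S : Finset (Fin n)) (lam : ℝ) (hlam : 0 < lam)
    (E : Matrix (Fin m) (Fin n) ℝ)
    (Dg : Set (Fin m → ℝ)) (gr : (Fin m → ℝ) → ℝ)
    (hgconv : ConvexOn ℝ Dg gr)
    (hCg : (interior Dg).Nonempty)
    (hgs : StrictConvexOn ℝ (interior Dg) gr)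
    (hA3 : (∀ t₀ ∈ frontier (interior Dg),
              Filter.Tendsto gr (nhdsWithin t₀ (interior Dg)) Filter.atTop)
           ∨ (S = Finset.univ ∧ (∀ t, 0 ≤ gr t) ∧ Dg = Set.univ))
    (X : Set (Fin n → ℝ)) (hX : X = {x | ∀ i ∉ S, 0 ≤ x i})
    (F : (Fin n → ℝ) → ℝ)
    (hF : ∀ x, F x = gr (E.mulVec x) + lam * ∑ i ∈ S, |x i|)
    (XStar : Set (Fin n → ℝ))
    (hXStar : XStar = {x | x ∈ X ∧ E.mulVec x ∈ Dg ∧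
                ∀ y ∈ X, E.mulVec y ∈ Dg → F x ≤ F y}) :
    Convex ℝ XStar ∧ ∃ tstar : Fin m → ℝ, ∀ xs ∈ XStar, E.mulVec xs = tstar := by
  have hF' : F = fun x => gr (E.mulVecLin x) + lam * ∑ i ∈ S, |x i| := funext hF
  set K := X ∩ E.mulVecLin ⁻¹' Dg
  have hXStarK : XStar = {x ∈ K | IsMinOn F K x} := by
    ext x
    simp only [hXStar, isMinOn_iff, K, Set.mem_inter_iff, Set.mem_preimage, and_imp,
      Set.mem_ofPred_eq, and_assoc]
    rfl
  have hK : Convex ℝ K := (hX ▸ convex_setOf_forall_nonneg _).inter (hgconv.1.linear_preimage _)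
  have hl1 : ConvexOn ℝ K fun x => lam * ∑ i ∈ S, |x i| :=
    ((convexOn_sum_abs S).smul hlam.le).subset (Set.subset_univ K) hK
  have hFconv : ConvexOn ℝ K F := hF' ▸
    ((hgconv.comp_linearMap E.mulVecLin).subset Set.inter_subset_right hK).add hl1
  have hint : ∀ x ∈ K, E.mulVecLin x ∈ interior Dg := by
    rintro x ⟨-, hx⟩
    rcases hA3 with htop | ⟨-, -, rfl⟩
    · exact hgconv.mem_interior_of_tendsto_atTop hCg htop hx
    · simp
  refine ⟨hXStarK ▸ hFconv.convex_setOf_isMinOn, ?_⟩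
  rcases XStar.eq_empty_or_nonempty with hempty | ⟨x₀, hx₀⟩
  · exact ⟨0, by simp [hempty]⟩
  refine ⟨E *ᵥ x₀, fun x hx => ?_⟩
  rw [hXStarK, hF'] at hx hx₀
  exact eq_of_isMinOn_comp_add_of_strictConvexOn E.mulVecLin hgs hl1 hx.1 hx₀.1
    (hint x hx.1) (hint x₀ hx₀.1) hx.2 hx₀.2

/-- `𝒳*` is convex and `E x*` is constant on `𝒳*`. -/
theorem optimal_set_convex_and_Ex_constant
(m n : ℕ) (hm : 0 < m) (hn : 0 < n)
    (S : Finset (Fin n)) (lam : ℝ) (hlam : 0 < lam)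
    (E : Matrix (Fin m) (Fin n) ℝ) (hE : ∀ j, ∃ i, E i j ≠ 0)
    (Dg : Set (Fin m → ℝ)) (gr : (Fin m → ℝ) → ℝ)
    (hDg : Convex ℝ Dg) (hgconv : ConvexOn ℝ Dg gr)
    (hCg : (interior Dg).Nonempty)
    (hgs : StrictConvexOn ℝ (interior Dg) gr)
    (hgC2 : ContDiffOn ℝ 2 gr (interior Dg))
    (hhess : ∀ t ∈ interior Dg, ∀ v : Fin m → ℝ, v ≠ 0 → 0 < hessQF gr t v)
    (hA3 : (∀ t₀ ∈ frontier (interior Dg),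
              Filter.Tendsto gr (nhdsWithin t₀ (interior Dg)) Filter.atTop)
           ∨ (S = Finset.univ ∧ (∀ t, 0 ≤ gr t) ∧ Dg = Set.univ))
    (X : Set (Fin n → ℝ)) (hX : X = {x | ∀ i ∉ S, 0 ≤ x i})
    (F : (Fin n → ℝ) → ℝ)
    (hF : ∀ x, F x = gr (E.mulVec x) + lam * ∑ i ∈ S, |x i|)
    (XStar : Set (Fin n → ℝ))
    (hXStar : XStar = {x | x ∈ X ∧ E.mulVec x ∈ Dg ∧
                ∀ y ∈ X, E.mulVec y ∈ Dg → F x ≤ F y})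
    (hXStarNe : XStar.Nonempty) :
    Convex ℝ XStar ∧ ∃ tstar : Fin m → ℝ, ∀ xs ∈ XStar, E.mulVec xs = tstar :=
  optimal_set_convex_and_Ex_constant_general m n S lam hlam E Dg gr hgconv hCg hgs hA3 X hX F hF
    XStar hXStar
end

section
/- The differences between successive CCM iterates for f₁ vanish: ‖x^{r+1} − x^r‖ → 0 as r → ∞, where ‖·‖ is the Euclidean norm on ℝ^n. -/
open Filter Topology Matrix

/-! On a compact convex subset of the open domain of `g`, the positive definite Hessian gives a
uniform modulus of strong convexity, and the barrier assumption keeps closures of sublevel sets of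
`g` inside the domain. Quadratic growth of `f₁` near a minimizer, together with convexity, bounds
`E x` on the sublevel set `{f₁ ≤ f₁(x⁰)}`, so every `E x^{r,i}` lies in one compact convex set `K`
on which `g` is `σ`-strongly convex. As `x^{r,i+1}` minimizes `f₁` on a line through `x^{r,i}` that
contains their midpoint,
`f₁(x^{r,i}) - f₁(x^{r,i+1}) ≥ σ/4 ‖E eᵢ‖² (x^{r,i+1}_i - x^{r,i}_i)²`, where `E eᵢ ≠ 0` is the
`i`-th column of `E`. The values `f₁(x^r)` decrease and are bounded below, so the decrease over a
sweep tends to `0`, and with it every coordinate of `x^{r+1} - x^r`. -/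

open Set

section SecondDerivative

variable {W : Type*} [NormedAddCommGroup W] [NormedSpace ℝ W] {g : W → ℝ} {O K : Set W}

lemma hessQF_eq_fderiv_fderiv {m : ℕ} {gr : (Fin m → ℝ) → ℝ} {t : Fin m → ℝ}
    (h : DifferentiableAt ℝ (fderiv ℝ gr) t) (v : Fin m → ℝ) :
    hessQF gr t v = fderiv ℝ (fderiv ℝ gr) t v v := by
  have hpartial : ∀ i j, fderiv ℝ (fun s => gradv gr s j) t (Pi.single i 1)
      = fderiv ℝ (fderiv ℝ gr) t (Pi.single i 1) (Pi.single j 1) := fun i j =>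
    congrArg (· (Pi.single i 1))
      ((ContinuousLinearMap.apply ℝ ℝ (Pi.single j (1 : ℝ))).hasFDerivAt.comp t
        h.hasFDerivAt).fderiv
  conv_rhs => rw [pi_eq_sum_univ' v]
  simp only [hessQF, hpartial, map_sum, map_smul, FunLike.coe_sum, Finset.sum_apply,
    _root_.smul_apply, smul_eq_mul, Finset.mul_sum]
  rw [Finset.sum_comm]
  exact Finset.sum_congr rfl fun i _ => Finset.sum_congr rfl fun j _ => by ring

lemma ContDiffOn.differentiableAt_fderiv (hO : IsOpen O) (hg : ContDiffOn ℝ 2 g O) {t : W}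
    (ht : t ∈ O) : DifferentiableAt ℝ (fderiv ℝ g) t :=
  ((hg.fderiv_of_isOpen hO (by norm_num)).differentiableOn one_ne_zero t ht).differentiableAt
    (hO.mem_nhds ht)

lemma strongConvexOn_of_le_fderiv_fderiv (hO : IsOpen O) (hg : ContDiffOn ℝ 2 g O)
    (hKO : K ⊆ O) (hK : Convex ℝ K) {σ : ℝ}
    (hσ : ∀ t ∈ K, ∀ v, σ * ‖v‖ ^ 2 ≤ fderiv ℝ (fderiv ℝ g) t v v) :
    StrongConvexOn K σ g := by
  have hDg : ∀ p ∈ O, HasFDerivAt g (fderiv ℝ g p) p := fun p hp =>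
    ((hg.differentiableOn two_ne_zero p hp).differentiableAt (hO.mem_nhds hp)).hasFDerivAt
  have hD2g : ∀ p ∈ O, HasFDerivAt (fderiv ℝ g) (fderiv ℝ (fderiv ℝ g) p) p := fun p hp =>
    (hg.differentiableAt_fderiv hO hp).hasFDerivAt
  refine ⟨hK, fun u hu v hv a b ha hb hab => ?_⟩
  obtain rfl : a = 1 - b := by linarith
  set w := v - u
  set c := σ * ‖w‖ ^ 2
  have hline : ∀ s ∈ Icc (0 : ℝ) 1, u + s • w ∈ K := fun s hs => by
    convert hK hu hv (sub_nonneg.2 hs.2) hs.1 (sub_add_cancel 1 s) using 1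
    module
  have hline' (s : ℝ) : HasDerivAt (fun s : ℝ => u + s • w) w s := by
    simpa using ((hasDerivAt_id s).smul_const w).const_add u
  -- `φ` is convex on `[0, 1]` because its second derivative is `D²g(u + s w) w w - σ ‖w‖² ≥ 0`
  let φ (s : ℝ) := g (u + s • w) - c / 2 * s ^ 2
  have hφ' : ∀ s ∈ Icc (0 : ℝ) 1, HasDerivAt φ (fderiv ℝ g (u + s • w) w - c * s) s :=
    fun s hs => ((hDg _ (hKO (hline s hs))).comp_hasDerivAt s (hline' s)).sub
      (((hasDerivAt_pow 2 s).const_mul (c / 2)).congr_deriv (by ring))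
  have hφ'' : ∀ s ∈ Icc (0 : ℝ) 1, HasDerivAt (fun s => fderiv ℝ g (u + s • w) w - c * s)
      (fderiv ℝ (fderiv ℝ g) (u + s • w) w w - c) s := fun s hs => by
    have h := ((ContinuousLinearMap.apply ℝ ℝ w).hasFDerivAt.comp _
      (hD2g _ (hKO (hline s hs)))).comp_hasDerivAt s (hline' s)
    exact (h.sub ((hasDerivAt_id s).const_mul c)).congr_deriv (by simp)
  have hφ : ConvexOn ℝ (Icc 0 1) φ := by
    refine convexOn_of_hasDerivWithinAt2_nonneg (convex_Icc 0 1)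
      (fun s hs => (hφ' s hs).continuousAt.continuousWithinAt)
      (fun s hs => (hφ' s (interior_subset hs)).hasDerivWithinAt)
      (fun s hs => (hφ'' s (interior_subset hs)).hasDerivWithinAt) fun s hs => ?_
    exact sub_nonneg.2 (hσ _ (hline s (interior_subset hs)) w)
  have key := hφ.2 (left_mem_Icc.2 zero_le_one) (right_mem_Icc.2 zero_le_one) ha hb
    (sub_add_cancel 1 b)
  have hpt : (1 - b) • u + b • v = u + b • w := by module
  simp only [φ, smul_eq_mul, mul_zero, mul_one, zero_add, zero_smul, add_zero, one_smul,
    show u + w = v from add_sub_cancel u v] at key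
  rw [hpt, norm_sub_rev, smul_eq_mul, smul_eq_mul]
  linear_combination key

lemma exists_pos_mul_sq_norm_le_fderiv_fderiv [FiniteDimensional ℝ W] (hO : IsOpen O)
    (hg : ContDiffOn ℝ 2 g O) (hpos : ∀ t ∈ O, ∀ v ≠ 0, 0 < fderiv ℝ (fderiv ℝ g) t v v)
    (hKO : K ⊆ O) (hK : IsCompact K) :
    ∃ σ > 0, ∀ t ∈ K, ∀ v, σ * ‖v‖ ^ 2 ≤ fderiv ℝ (fderiv ℝ g) t v v := by
  have hcont : ContinuousOn (fun p : W × W => fderiv ℝ (fderiv ℝ g) p.1 p.2 p.2)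
      (K ×ˢ Metric.sphere 0 1) := by
    have h2 := (hg.fderiv_of_isOpen hO (by norm_num)).continuousOn_fderiv_of_isOpen hO le_rfl
    exact ((h2.mono hKO).comp continuousOn_fst fun p hp => hp.1).clm_apply continuousOn_snd
      |>.clm_apply continuousOn_snd
  obtain ⟨σ, hσ, hσle⟩ := (hK.prod (isCompact_sphere 0 1)).exists_forall_le' hcont
    fun p hp => hpos p.1 (hKO hp.1) p.2 (ne_zero_of_mem_unit_sphere ⟨p.2, hp.2⟩)
  refine ⟨σ, hσ, fun t ht v => ?_⟩
  rcases eq_or_ne v 0 with rfl | hv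
  · simp
  have hu : ‖v‖⁻¹ • v ∈ Metric.sphere (0 : W) 1 := by
    simp [norm_smul, hv]
  have key := hσle (t, _) ⟨ht, hu⟩
  simp only [map_smul, _root_.smul_apply, smul_eq_mul] at key
  have hv' : 0 < ‖v‖ := norm_pos_iff.2 hv
  calc σ * ‖v‖ ^ 2 ≤ ‖v‖⁻¹ * (‖v‖⁻¹ * fderiv ℝ (fderiv ℝ g) t v v) * ‖v‖ ^ 2 := by gcongr
    _ = fderiv ℝ (fderiv ℝ g) t v v := by field_simp

lemma exists_strongConvexOn_of_isCompact [FiniteDimensional ℝ W] (hO : IsOpen O)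
    (hg : ContDiffOn ℝ 2 g O) (hpos : ∀ t ∈ O, ∀ v ≠ 0, 0 < fderiv ℝ (fderiv ℝ g) t v v)
    (hKO : K ⊆ O) (hK : IsCompact K) (hKc : Convex ℝ K) : ∃ σ > 0, StrongConvexOn K σ g :=
  let ⟨σ, hσ, hσle⟩ := exists_pos_mul_sq_norm_le_fderiv_fderiv hO hg hpos hKO hK
  ⟨σ, hσ, strongConvexOn_of_le_fderiv_fderiv hO hg hKO hKc hσle⟩

end SecondDerivative

lemma closure_sublevel_subset_of_tendsto_atTop {T : Type*} [TopologicalSpace T] {g : T → ℝ}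
    {O : Set T} (hO : IsOpen O)
    (hg : ∀ z ∈ frontier O, Tendsto g (𝓝[O] z) atTop) (L : ℝ) :
    closure {u | u ∈ O ∧ g u ≤ L} ⊆ O := by
  intro z hz
  by_contra hzO
  have hzfr : z ∈ frontier O := ⟨closure_mono (fun u hu => hu.1) hz, by rwa [hO.interior_eq]⟩
  have := mem_closure_iff_nhdsWithin_neBot.1 hz
  have hbig := ((hg z hzfr).mono_left
    (nhdsWithin_mono z (sep_subset O fun u => g u ≤ L))).eventually_gt_atTop L
  obtain ⟨u, hgu, hu⟩ := (hbig.and self_mem_nhdsWithin).exists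
  exact (hgu.trans_le hu.2).false

section Barrier

variable {W : Type*} [NormedAddCommGroup W] [NormedSpace ℝ W] {g : W → ℝ} {D : Set W}

lemma Convex.subset_interior_of_tendsto_atTop (hD : Convex ℝ D) (hg : ConvexOn ℝ D g)
    (hne : (interior D).Nonempty)
    (htend : ∀ z ∈ frontier (interior D), Tendsto g (𝓝[interior D] z) atTop) :
    D ⊆ interior D := by
  intro t ht
  obtain ⟨c, hc⟩ := hne
  have hseg : openSegment ℝ c t ⊆ {u | u ∈ interior D ∧ g u ≤ max (g c) (g t)} :=
    fun u hu => ⟨hD.openSegment_interior_closure_subset_interior hc (subset_closure ht) hu,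
      hg.le_max_of_mem_segment (interior_subset hc) ht (openSegment_subset_segment ℝ c t hu)⟩
  exact closure_sublevel_subset_of_tendsto_atTop isOpen_interior htend _
    (closure_mono hseg (segment_subset_closure_openSegment (right_mem_segment ℝ c t)))

lemma Convex.interior_eq_and_closure_sublevel_subset (hD : Convex ℝ D) (hg : ConvexOn ℝ D g)
    (hne : (interior D).Nonempty)
    (hbarrier : (∀ z ∈ frontier (interior D), Tendsto g (𝓝[interior D] z) atTop) ∨ D = univ) :
    interior D = D ∧ ∀ L, closure {u | u ∈ D ∧ g u ≤ L} ⊆ D := by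
  rcases hbarrier with htend | rfl
  · have hopen := interior_subset.antisymm (hD.subset_interior_of_tendsto_atTop hg hne htend)
    exact ⟨hopen, fun L => by
      simpa only [hopen] using closure_sublevel_subset_of_tendsto_atTop isOpen_interior htend L⟩
  · exact ⟨interior_univ, fun _ => subset_univ _⟩

end Barrier

section Composite

variable {V W : Type*} [AddCommGroup V] [Module ℝ V] [NormedAddCommGroup W] [NormedSpace ℝ W]
  (A : V →ₗ[ℝ] W) {g : W → ℝ} {P : V → ℝ}

lemma StrongConvexOn.add_sq_norm_le_of_le_midpoint {K : Set W} {σ : ℝ}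
    (hg : StrongConvexOn K σ g) (hP : ConvexOn ℝ univ P) {z w : V} (hz : A z ∈ K) (hw : A w ∈ K)
    (hmid : g (A z) + P z ≤
      g (A ((2⁻¹ : ℝ) • z + (2⁻¹ : ℝ) • w)) + P ((2⁻¹ : ℝ) • z + (2⁻¹ : ℝ) • w)) :
    g (A z) + P z + σ / 4 * ‖A z - A w‖ ^ 2 ≤ g (A w) + P w := by
  have h2 : (0 : ℝ) ≤ 2⁻¹ := by norm_num
  have hgmid := hg.2 hz hw h2 h2 (by norm_num)
  have hPmid := hP.2 (mem_univ z) (mem_univ w) h2 h2 (by norm_num)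
  rw [map_add, map_smul, map_smul] at hmid
  simp only [smul_eq_mul] at hgmid hPmid
  linarith

lemma ConvexOn.norm_map_sub_le_of_growth {C : Set V} {F : V → ℝ} (hF : ConvexOn ℝ C F) {x₀ : V}
    (hx₀ : x₀ ∈ C) {δ c : ℝ} (hδ : 0 < δ) (hc : 0 < c)
    (hgrowth : ∀ y ∈ C, ‖A y - A x₀‖ = δ → F x₀ + c ≤ F y) {p : V} (hp : p ∈ C) :
    ‖A p - A x₀‖ ≤ max δ (δ * (F p - F x₀) / c) := by
  by_contra! h
  set s := ‖A p - A x₀‖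
  have hδs : δ < s := (le_max_left _ _).trans_lt h
  have hs : 0 < s := hδ.trans hδs
  set θ := δ / s
  have hθ0 : 0 < θ := div_pos hδ hs
  have hθ1 : θ ≤ 1 := (div_le_one hs).2 hδs.le
  set y := (1 - θ) • x₀ + θ • p
  have hy : y ∈ C := hF.1 hx₀ hp (sub_nonneg.2 hθ1) hθ0.le (sub_add_cancel 1 θ)
  have hAy : ‖A y - A x₀‖ = δ := by
    have : A y - A x₀ = θ • (A p - A x₀) := by
      simp only [y, map_add, map_smul]; module
    rw [this, norm_smul, Real.norm_of_nonneg hθ0.le, div_mul_cancel₀ _ hs.ne']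
  have hgr := hgrowth _ hy hAy
  have hcvx := hF.2 hx₀ hp (sub_nonneg.2 hθ1) hθ0.le (sub_add_cancel 1 θ)
  simp only [smul_eq_mul] at hcvx
  have hcs : c * s ≤ δ * (F p - F x₀) := by
    have : c ≤ δ / s * (F p - F x₀) := by linarith
    rwa [div_mul_eq_mul_div, le_div_iff₀ hs] at this
  exact ((le_max_right _ _).trans_lt h).not_ge ((le_div_iff₀ hc).2 (by linarith))

lemma exists_strongConvexOn_of_sublevel [FiniteDimensional ℝ W] {O : Set W} {C : Set V}
    (hO : IsOpen O) (hg2 : ContDiffOn ℝ 2 g O)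
    (hpos : ∀ t ∈ O, ∀ v ≠ 0, 0 < fderiv ℝ (fderiv ℝ g) t v v) (hg : ConvexOn ℝ O g)
    (hC : Convex ℝ C) (hCO : ∀ x ∈ C, A x ∈ O) (hP : ConvexOn ℝ univ P) (hP0 : ∀ x, 0 ≤ P x)
    {x₀ : V} (hx₀ : x₀ ∈ C) (hmin : ∀ y ∈ C, g (A x₀) + P x₀ ≤ g (A y) + P y) {L : ℝ}
    (hcl : closure {u | u ∈ O ∧ g u ≤ L} ⊆ O) :
    ∃ σ > 0, ∃ K, StrongConvexOn K σ g ∧ ∀ x ∈ C, g (A x) + P x ≤ L → A x ∈ K := by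
  obtain ⟨δ, hδ, hball⟩ := Metric.nhds_basis_closedBall.mem_iff.1 (hO.mem_nhds (hCO x₀ hx₀))
  obtain ⟨σ₀, hσ₀, hstrong₀⟩ := exists_strongConvexOn_of_isCompact hO hg2 hpos hball
    (isCompact_closedBall _ _) (convex_closedBall _ _)
  have hF : ConvexOn ℝ C fun x => g (A x) + P x :=
    ((hg.comp_linearMap A).subset hCO hC).add (hP.subset (subset_univ C) hC)
  have hgrowth : ∀ y ∈ C, ‖A y - A x₀‖ = δ →
      g (A x₀) + P x₀ + σ₀ / 4 * δ ^ 2 ≤ g (A y) + P y := by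
    intro y hy hyδ
    have hyball : A y ∈ Metric.closedBall (A x₀) δ := by
      rw [Metric.mem_closedBall, dist_eq_norm, hyδ]
    have := hstrong₀.add_sq_norm_le_of_le_midpoint A hP (Metric.mem_closedBall_self hδ.le) hyball
      (hmin _ (hC hx₀ hy (by norm_num) (by norm_num) (by norm_num)))
    rwa [norm_sub_rev, hyδ] at this
  -- by quadratic growth on the `δ`-ball and convexity, `‖A x - A x₀‖ ≤ R` on the sublevel set
  set R := max δ (δ * (L - (g (A x₀) + P x₀)) / (σ₀ / 4 * δ ^ 2))
  obtain ⟨σ, hσ, hstrong⟩ := exists_strongConvexOn_of_isCompact hO hg2 hpos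
    (inter_subset_left.trans hcl) ((isCompact_closedBall (A x₀) R).inter_left isClosed_closure)
    ((hg.convex_le L).closure.inter (convex_closedBall _ _))
  refine ⟨σ, hσ, _, hstrong, fun x hx hxL => ⟨subset_closure ⟨hCO x hx, by linarith [hP0 x]⟩, ?_⟩⟩
  rw [Metric.mem_closedBall, dist_eq_norm]
  refine (hF.norm_map_sub_le_of_growth A hx₀ hδ (by positivity) hgrowth hx).trans
    (max_le_max le_rfl ?_)
  gcongr

end Composite

section CoordinateMinimization

variable {ι : Type*} {C : Set (ι → ℝ)} {F : (ι → ℝ) → ℝ} {a b : ι → ℝ} {i : ι}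

structure IsCoordMin (C : Set (ι → ℝ)) (F : (ι → ℝ) → ℝ) (a b : ι → ℝ) (i : ι) : Prop where
  mem : b ∈ C
  apply_of_ne : ∀ j ≠ i, b j = a j
  le : ∀ y ∈ C, (∀ j ≠ i, y j = a j) → F b ≤ F y

namespace IsCoordMin

lemma le_self (h : IsCoordMin C F a b i) (ha : a ∈ C) : F b ≤ F a :=
  h.le a ha fun _ _ => rfl

lemma le_midpoint (h : IsCoordMin C F a b i) (hC : Convex ℝ C) (ha : a ∈ C) :
    F b ≤ F ((2⁻¹ : ℝ) • b + (2⁻¹ : ℝ) • a) :=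
  h.le _ (hC h.mem ha (by norm_num) (by norm_num) (by norm_num)) fun j hj => by
    simp only [Pi.add_apply, Pi.smul_apply, smul_eq_mul, h.apply_of_ne j hj]
    ring

lemma sub_eq_smul_single [DecidableEq ι] (h : IsCoordMin C F a b i) :
    b - a = (b i - a i) • Pi.single i 1 := by
  ext j
  rcases eq_or_ne j i with rfl | hj
  · simp
  · simp [hj, h.apply_of_ne j hj]

end IsCoordMin

variable {n : ℕ} {C : Set (Fin n → ℝ)} {F : (Fin n → ℝ) → ℝ} {x : ℕ → Fin n → ℝ}
  {xi : ℕ → ℕ → Fin n → ℝ}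

/-- Cyclic coordinatewise minimization; `xi r k` is the inner iterate `x^{r,k}`. -/
structure IsCCMRun (C : Set (Fin n → ℝ)) (F : (Fin n → ℝ) → ℝ) (x : ℕ → Fin n → ℝ)
    (xi : ℕ → ℕ → Fin n → ℝ) : Prop where
  start_mem : x 0 ∈ C
  inner_zero : ∀ r, xi r 0 = x r
  inner_succ : ∀ r (i : Fin n), IsCoordMin C F (xi r i) (xi r (i + 1)) i
  outer_succ : ∀ r, x (r + 1) = xi r n

namespace IsCCMRun

variable (h : IsCCMRun C F x xi)
include h

lemma inner_mem_of_outer_mem {r : ℕ} (hr : x r ∈ C) : ∀ k ≤ n, xi r k ∈ C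
  | 0, _ => h.inner_zero r ▸ hr
  | k + 1, hk => (h.inner_succ r ⟨k, hk⟩).mem

lemma outer_mem : ∀ r, x r ∈ C
  | 0 => h.start_mem
  | r + 1 => h.outer_succ r ▸ h.inner_mem_of_outer_mem (outer_mem r) n le_rfl

lemma inner_mem (r : ℕ) {k : ℕ} (hk : k ≤ n) : xi r k ∈ C :=
  h.inner_mem_of_outer_mem (h.outer_mem r) k hk

lemma inner_le_inner (r : ℕ) {k l : ℕ} (hkl : k ≤ l) (hl : l ≤ n) : F (xi r l) ≤ F (xi r k) := by
  induction l, hkl using Nat.le_induction with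
  | base => exact le_rfl
  | succ l _ ih =>
    exact ((h.inner_succ r ⟨l, hl⟩).le_self (h.inner_mem r (by omega))).trans (ih (by omega))

lemma outer_succ_le (r : ℕ) : F (x (r + 1)) ≤ F (x r) := by
  simpa only [h.outer_succ, h.inner_zero] using h.inner_le_inner r (Nat.zero_le n) le_rfl

lemma inner_le_start (r : ℕ) {k : ℕ} (hk : k ≤ n) : F (xi r k) ≤ F (x 0) :=
  calc F (xi r k) ≤ F (xi r 0) := h.inner_le_inner r (Nat.zero_le k) hk
    _ = F (x r) := by rw [h.inner_zero]
    _ ≤ F (x 0) := antitone_nat_of_succ_le (f := fun r => F (x r)) h.outer_succ_le (Nat.zero_le r)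

lemma inner_sub_le_outer_sub (r : ℕ) {k : ℕ} (hk : k < n) :
    F (xi r k) - F (xi r (k + 1)) ≤ F (x r) - F (x (r + 1)) := by
  have h0 := h.inner_le_inner r (Nat.zero_le k) hk.le
  have h1 := h.inner_le_inner r hk le_rfl
  rw [h.inner_zero] at h0
  rw [← h.outer_succ] at h1
  linarith

lemma inner_apply_of_le (r : ℕ) {j : Fin n} : ∀ {k : ℕ}, k ≤ j → xi r k j = x r j
  | 0, _ => by rw [h.inner_zero]
  | k + 1, hk => by
    rw [(h.inner_succ r ⟨k, by omega⟩).apply_of_ne j (Fin.ne_of_val_ne (by simp; omega)),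
      inner_apply_of_le r (k := k) (by omega)]

lemma inner_apply_of_lt (r : ℕ) {j : Fin n} {k : ℕ} (hjk : (j : ℕ) < k) (hk : k ≤ n) :
    xi r k j = xi r (j + 1) j := by
  induction k, hjk using Nat.le_induction with
  | base => rfl
  | succ k hjk ih =>
    rw [(h.inner_succ r ⟨k, hk⟩).apply_of_ne j (Fin.ne_of_val_ne (by simp; omega)),
      ih (by omega)]

lemma outer_sub_apply (r : ℕ) (j : Fin n) :
    x (r + 1) j - x r j = xi r (j + 1) j - xi r j j := by
  rw [h.outer_succ, h.inner_apply_of_lt r j.isLt le_rfl, h.inner_apply_of_le r le_rfl]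

lemma tendsto_sq_outer_sub {m₀ : ℝ} (hbdd : ∀ y ∈ C, m₀ ≤ F y) {c : Fin n → ℝ}
    (hc : ∀ j, 0 < c j)
    (hdec : ∀ r (i : Fin n), c i * (xi r (i + 1) i - xi r i i) ^ 2 ≤ F (xi r i) - F (xi r (i + 1)))
    (j : Fin n) : Tendsto (fun r => (x (r + 1) j - x r j) ^ 2) atTop (𝓝 0) := by
  have hlim : Tendsto (fun r => F (x r) - F (x (r + 1))) atTop (𝓝 0) := by
    have hF := tendsto_atTop_ciInf (antitone_nat_of_succ_le (f := fun r => F (x r))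
      h.outer_succ_le) ⟨m₀, by rintro _ ⟨r, rfl⟩; exact hbdd _ (h.outer_mem r)⟩
    simpa using hF.sub (hF.comp (tendsto_add_atTop_nat 1))
  refine squeeze_zero (fun r => sq_nonneg _) (fun r => ?_) (by simpa using hlim.div_const (c j))
  rw [h.outer_sub_apply, le_div_iff₀' (hc j)]
  exact (hdec r j).trans (h.inner_sub_le_outer_sub r j.isLt)

end IsCCMRun

end CoordinateMinimization

lemma IsCoordMin.mul_sq_le_sub {ι W : Type*} [DecidableEq ι] [NormedAddCommGroup W]
    [NormedSpace ℝ W] (A : (ι → ℝ) →ₗ[ℝ] W) {g : W → ℝ} {P : (ι → ℝ) → ℝ} {C : Set (ι → ℝ)}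
    {K : Set W} {σ : ℝ} {a b : ι → ℝ} {i : ι} (h : IsCoordMin C (fun x => g (A x) + P x) a b i)
    (hC : Convex ℝ C) (ha : a ∈ C) (hg : StrongConvexOn K σ g) (hP : ConvexOn ℝ univ P)
    (haK : A a ∈ K) (hbK : A b ∈ K) :
    σ / 4 * ‖A (Pi.single i 1)‖ ^ 2 * (b i - a i) ^ 2 ≤ g (A a) + P a - (g (A b) + P b) := by
  have key := hg.add_sq_norm_le_of_le_midpoint A hP hbK haK (h.le_midpoint hC ha)
  rw [← map_sub, h.sub_eq_smul_single, map_smul, norm_smul, Real.norm_eq_abs, mul_pow,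
    sq_abs] at key
  linarith

lemma convexOn_mul_sum_abs {ι : Type*} {lam : ℝ} (hlam : 0 ≤ lam) (S : Finset ι) :
    ConvexOn ℝ univ fun x : ι → ℝ => lam * ∑ i ∈ S, |x i| := by
  refine ConvexOn.smul hlam ⟨convex_univ, fun x _ y _ a b ha hb _ => ?_⟩
  simp only [smul_eq_mul, Finset.mul_sum, ← Finset.sum_add_distrib, Pi.add_apply, Pi.smul_apply]
  gcongr with i
  exact (abs_add_le _ _).trans_eq (by rw [abs_mul, abs_mul, abs_of_nonneg ha, abs_of_nonneg hb])

lemma convex_setOf_nonneg_of_notMem {ι : Type*} (S : Finset ι) :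
    Convex ℝ {x : ι → ℝ | ∀ i ∉ S, 0 ≤ x i} := fun p hp q hq a b ha hb _ i hi => by
  simpa using add_nonneg (mul_nonneg ha (hp i hi)) (mul_nonneg hb (hq i hi))

lemma Matrix.mulVecLin_single_one_ne_zero {m n : ℕ} {E : Matrix (Fin m) (Fin n) ℝ} {j : Fin n}
    (hE : ∃ i, E i j ≠ 0) : E.mulVecLin (Pi.single j 1) ≠ 0 := fun h0 =>
  let ⟨i, hi⟩ := hE
  hi (by simpa using congrFun h0 i)

lemma tendsto_enorm_of_tendsto_sq {α : Type*} {l : Filter α} {k : ℕ} {v : α → Fin k → ℝ}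
    (h : ∀ j, Tendsto (fun r => v r j ^ 2) l (𝓝 0)) :
    Tendsto (fun r => _root_.enorm (v r)) l (𝓝 0) := by
  simpa [_root_.enorm] using (tendsto_finsetSum Finset.univ fun j _ => h j).sqrt

lemma IsCCMRun.tendsto_enorm_sub {n : ℕ} {W : Type*} [NormedAddCommGroup W] [NormedSpace ℝ W]
    (A : (Fin n → ℝ) →ₗ[ℝ] W) {g : W → ℝ} {P : (Fin n → ℝ) → ℝ} {C : Set (Fin n → ℝ)}
    {x : ℕ → Fin n → ℝ} {xi : ℕ → ℕ → Fin n → ℝ} (h : IsCCMRun C (fun x => g (A x) + P x) x xi)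
    (hC : Convex ℝ C) {K : Set W} {σ : ℝ} (hg : StrongConvexOn K σ g) (hσ : 0 < σ)
    (hP : ConvexOn ℝ univ P) (hCK : ∀ y ∈ C, g (A y) + P y ≤ g (A (x 0)) + P (x 0) → A y ∈ K)
    (hA : ∀ i, A (Pi.single i 1) ≠ 0) {m₀ : ℝ} (hbdd : ∀ y ∈ C, m₀ ≤ g (A y) + P y) :
    Tendsto (fun r => _root_.enorm (x (r + 1) - x r)) atTop (𝓝 0) := by
  have hdec (r : ℕ) (i : Fin n) := (h.inner_succ r i).mul_sq_le_sub A hC (h.inner_mem r i.isLt.le)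
    hg hP (hCK _ (h.inner_mem r i.isLt.le) (h.inner_le_start r i.isLt.le))
    (hCK _ (h.inner_mem r i.isLt) (h.inner_le_start r i.isLt))
  refine tendsto_enorm_of_tendsto_sq fun j => ?_
  simpa using h.tendsto_sq_outer_sub hbdd (c := fun i => σ / 4 * ‖A (Pi.single i 1)‖ ^ 2)
    (fun i => by have := norm_pos_iff.2 (hA i); positivity) hdec j

theorem ccm_f1_successive_differences_vanish_general
(m n : ℕ)
    (S : Finset (Fin n)) (lam : ℝ) (hlam : 0 < lam)
    (E : Matrix (Fin m) (Fin n) ℝ) (hE : ∀ j, ∃ i, E i j ≠ 0)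
    (Dg : Set (Fin m → ℝ)) (gr : (Fin m → ℝ) → ℝ)
    (hDg : Convex ℝ Dg) (hgconv : ConvexOn ℝ Dg gr)
    (hCg : (interior Dg).Nonempty)
    (hgC2 : ContDiffOn ℝ 2 gr (interior Dg))
    (hhess : ∀ t ∈ interior Dg, ∀ v : Fin m → ℝ, v ≠ 0 → 0 < hessQF gr t v)
    (hA3 : (∀ t₀ ∈ frontier (interior Dg),
              Filter.Tendsto gr (nhdsWithin t₀ (interior Dg)) Filter.atTop)
           ∨ (S = Finset.univ ∧ (∀ t, 0 ≤ gr t) ∧ Dg = Set.univ))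
    (X : Set (Fin n → ℝ)) (hX : X = {x | ∀ i ∉ S, 0 ≤ x i})
    (F : (Fin n → ℝ) → ℝ)
    (hF : ∀ x, F x = gr (E.mulVec x) + lam * ∑ i ∈ S, |x i|)
    (XStar : Set (Fin n → ℝ))
    (hXStar : XStar = {x | x ∈ X ∧ E.mulVec x ∈ Dg ∧
                ∀ y ∈ X, E.mulVec y ∈ Dg → F x ≤ F y})
    (hXStarNe : XStar.Nonempty)
(x : ℕ → Fin n → ℝ) (xi : ℕ → ℕ → Fin n → ℝ)
    (hx0 : x 0 ∈ X) (hx0fin : E.mulVec (x 0) ∈ Dg)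
    (hxi0 : ∀ r, xi r 0 = x r)
    (hstep : ∀ r, ∀ i : Fin n,
        xi r ((i : ℕ) + 1) ∈ X ∧ E.mulVec (xi r ((i : ℕ) + 1)) ∈ Dg ∧
        (∀ j, j ≠ i → xi r ((i : ℕ) + 1) j = xi r (i : ℕ) j) ∧
        (∀ y ∈ X, (∀ j, j ≠ i → y j = xi r (i : ℕ) j) →
            E.mulVec y ∈ Dg → F (xi r ((i : ℕ) + 1)) ≤ F y))
    (hxsucc : ∀ r, x (r + 1) = xi r n) :
    Filter.Tendsto (fun r => _root_.enorm (x (r + 1) - x r)) Filter.atTop (nhds 0) := by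
  obtain ⟨hopen, hcl⟩ :=
    hDg.interior_eq_and_closure_sublevel_subset hgconv hCg (hA3.imp_right fun h => h.2.2)
  rw [hopen] at hgC2 hhess
  have hDgopen : IsOpen Dg := hopen ▸ isOpen_interior
  have hpos : ∀ t ∈ Dg, ∀ v ≠ 0, 0 < fderiv ℝ (fderiv ℝ gr) t v v := fun t ht v hv =>
    hessQF_eq_fderiv_fderiv (hgC2.differentiableAt_fderiv hDgopen ht) v ▸ hhess t ht v hv
  set C := {y | y ∈ X ∧ E *ᵥ y ∈ Dg}
  have hC : Convex ℝ C :=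
    (hX ▸ convex_setOf_nonneg_of_notMem S).inter (hDg.linear_preimage E.mulVecLin)
  have hrun : IsCCMRun C F x xi := ⟨⟨hx0, hx0fin⟩, hxi0, fun r i => ⟨⟨(hstep r i).1,
    (hstep r i).2.1⟩, (hstep r i).2.2.1, fun y hy hya => (hstep r i).2.2.2 y hy.1 hya hy.2⟩, hxsucc⟩
  have hcl₀ := hcl (F (x 0))
  obtain rfl : F = fun x => gr (E.mulVecLin x) + lam * ∑ i ∈ S, |x i| := funext hF
  obtain ⟨xs, hxsX, hxsDg, hxsmin⟩ := hXStar ▸ hXStarNe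
  have hP := convexOn_mul_sum_abs hlam.le S
  obtain ⟨σ, hσ, K, hK, hCK⟩ := exists_strongConvexOn_of_sublevel E.mulVecLin hDgopen
    hgC2 hpos hgconv hC (fun y hy => hy.2) hP (fun y => by positivity) ⟨hxsX, hxsDg⟩
    (fun y hy => hxsmin y hy.1 hy.2) hcl₀
  exact hrun.tendsto_enorm_sub E.mulVecLin hC hK hσ hP hCK
    (fun j => Matrix.mulVecLin_single_one_ne_zero (hE j)) fun y hy => hxsmin y hy.1 hy.2

/-- Successive CCM iterates for `f₁` get arbitrarily close: `‖x^{r+1} − x^r‖ → 0`. -/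
theorem ccm_f1_successive_differences_vanish
(m n : ℕ) (hm : 0 < m) (hn : 0 < n)
    (S : Finset (Fin n)) (lam : ℝ) (hlam : 0 < lam)
    (E : Matrix (Fin m) (Fin n) ℝ) (hE : ∀ j, ∃ i, E i j ≠ 0)
    (Dg : Set (Fin m → ℝ)) (gr : (Fin m → ℝ) → ℝ)
    (hDg : Convex ℝ Dg) (hgconv : ConvexOn ℝ Dg gr)
    (hCg : (interior Dg).Nonempty)
    (hgs : StrictConvexOn ℝ (interior Dg) gr)
    (hgC2 : ContDiffOn ℝ 2 gr (interior Dg))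
    (hhess : ∀ t ∈ interior Dg, ∀ v : Fin m → ℝ, v ≠ 0 → 0 < hessQF gr t v)
    (hA3 : (∀ t₀ ∈ frontier (interior Dg),
              Filter.Tendsto gr (nhdsWithin t₀ (interior Dg)) Filter.atTop)
           ∨ (S = Finset.univ ∧ (∀ t, 0 ≤ gr t) ∧ Dg = Set.univ))
    (X : Set (Fin n → ℝ)) (hX : X = {x | ∀ i ∉ S, 0 ≤ x i})
    (F : (Fin n → ℝ) → ℝ)
    (hF : ∀ x, F x = gr (E.mulVec x) + lam * ∑ i ∈ S, |x i|)
    (XStar : Set (Fin n → ℝ))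
    (hXStar : XStar = {x | x ∈ X ∧ E.mulVec x ∈ Dg ∧
                ∀ y ∈ X, E.mulVec y ∈ Dg → F x ≤ F y})
    (hXStarNe : XStar.Nonempty)
(x : ℕ → Fin n → ℝ) (xi : ℕ → ℕ → Fin n → ℝ)
    (hx0 : x 0 ∈ X) (hx0fin : E.mulVec (x 0) ∈ Dg)
    (hxi0 : ∀ r, xi r 0 = x r)
    (hstep : ∀ r, ∀ i : Fin n,
        xi r ((i : ℕ) + 1) ∈ X ∧ E.mulVec (xi r ((i : ℕ) + 1)) ∈ Dg ∧
        (∀ j, j ≠ i → xi r ((i : ℕ) + 1) j = xi r (i : ℕ) j) ∧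
        (∀ y ∈ X, (∀ j, j ≠ i → y j = xi r (i : ℕ) j) →
            E.mulVec y ∈ Dg → F (xi r ((i : ℕ) + 1)) ≤ F y))
    (hxsucc : ∀ r, x (r + 1) = xi r n) :
    Filter.Tendsto (fun r => _root_.enorm (x (r + 1) - x r)) Filter.atTop (nhds 0) :=
  ccm_f1_successive_differences_vanish_general m n S lam hlam E hE Dg gr hDg hgconv hCg hgC2 hhess
    hA3 X hX F hF XStar hXStar hXStarNe x xi hx0 hx0fin hxi0 hstep hxsucc
end

section
/- Let t* ∈ ℝ^m be the common value of E x* over x* ∈ 𝒳*, and set t^{r,i} = E x^{r,i}. Then for every 0 ≤ i ≤ n, ‖t^{r,i} − t*‖ → 0 as r → ∞. -/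
/-!
The objective `F x = g (E x) + λ ∑_{i ∈ S} |x i|` decreases along the iterates, so its values
converge to some `L`. Each coordinate step beats the midpoint of its endpoints, which bounds the
midpoint gap of `g` between consecutive points `E x^{r,i}` by the decrease of `F`; by strict
convexity consecutive points therefore merge in the limit. The blow-up of `g` at the boundary makes
its domain open and its sublevel sets closed, and a recession-direction argument (using that the
polyhedral cone `{(E x, x|_S) : x ∈ 𝒳}` is closed) shows that `E x^{r,i}` and `x^{r,i}|_S` stay
bounded. Along a subsequence all `E x^{r,i}` then converge to one point, where the gradient
inequality and the coordinatewise KKT conditions of the steps give `L ≤ F x*`. So `L = F x*`, the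
midpoint gap between `E x^{r,i}` and `t*` tends to zero, and strict convexity with compactness
forces `E x^{r,i} → t*`.
-/

open Filter Topology Matrix

noncomputable def euclNorm {k : ℕ} (v : Fin k → ℝ) : ℝ := Real.sqrt (∑ i, v i ^ 2)

open Set

section MidpointGap

variable {V : Type*} [AddCommGroup V] [Module ℝ V]

lemma midpoint_real_eq (a b : V) : midpoint ℝ a b = (1 / 2 : ℝ) • a + (1 / 2 : ℝ) • b := by
  rw [midpoint_eq_smul_add, invOf_eq_inv, smul_add, one_div]

noncomputable def midpointGap (g : V → ℝ) (a b : V) : ℝ := (g a + g b) / 2 - g (midpoint ℝ a b)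

lemma ConvexOn.midpointGap_nonneg {s : Set V} {g : V → ℝ} (hg : ConvexOn ℝ s g) {a b : V}
    (ha : a ∈ s) (hb : b ∈ s) : 0 ≤ midpointGap g a b := by
  have := hg.2 ha hb (by norm_num : (0 : ℝ) ≤ 1 / 2) (by norm_num : (0 : ℝ) ≤ 1 / 2) (by norm_num)
  rw [midpointGap, midpoint_real_eq]
  simp only [smul_eq_mul] at this
  linarith

lemma StrictConvexOn.midpointGap_pos {s : Set V} {g : V → ℝ} (hg : StrictConvexOn ℝ s g)
    {a b : V} (ha : a ∈ s) (hb : b ∈ s) (hab : a ≠ b) : 0 < midpointGap g a b := by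
  have := hg.2 ha hb hab (by norm_num : (0 : ℝ) < 1 / 2) (by norm_num : (0 : ℝ) < 1 / 2)
    (by norm_num)
  rw [midpointGap, midpoint_real_eq]
  simp only [smul_eq_mul] at this
  linarith

end MidpointGap

section ConvexAnalysis

variable {V : Type*} [NormedAddCommGroup V] [NormedSpace ℝ V]

lemma StrictConvexOn.eq_of_tendsto_midpointGap {U : Set V} {g : V → ℝ}
    (hg : StrictConvexOn ℝ U g) (hU : IsOpen U) (hcont : ContinuousOn g U)
    {ι : Type*} {l : Filter ι} [l.NeBot] {a b : ι → V} {a₀ b₀ : V} (ha₀ : a₀ ∈ U) (hb₀ : b₀ ∈ U)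
    (ha : Tendsto a l (𝓝 a₀)) (hb : Tendsto b l (𝓝 b₀))
    (hgap : Tendsto (fun k => midpointGap g (a k) (b k)) l (𝓝 0)) : a₀ = b₀ := by
  have hcontAt : ∀ c ∈ U, ContinuousAt g c := fun c hc => hcont.continuousAt (hU.mem_nhds hc)
  have hmid : midpoint ℝ a₀ b₀ ∈ U := hg.1.midpoint_mem ha₀ hb₀
  have hlim : Tendsto (fun k => midpointGap g (a k) (b k)) l (𝓝 (midpointGap g a₀ b₀)) :=
    (((hcontAt a₀ ha₀).tendsto.comp ha).add ((hcontAt b₀ hb₀).tendsto.comp hb)).div_const 2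
      |>.sub ((hcontAt _ hmid).tendsto.comp (ha.midpoint hb))
  by_contra hne
  exact (hg.midpointGap_pos ha₀ hb₀ hne).ne' (tendsto_nhds_unique hlim hgap)

lemma ConvexOn.add_fderiv_sub_le {U : Set V} {g : V → ℝ} (hg : ConvexOn ℝ U g) {a b : V}
    (ha : a ∈ U) (hb : b ∈ U) (hdiff : DifferentiableAt ℝ g a) :
    g a + fderiv ℝ g a (b - a) ≤ g b := by
  let line : ℝ →ᵃ[ℝ] V := AffineMap.lineMap a b
  have hline : ConvexOn ℝ (Icc 0 1) (g ∘ line) :=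
    (hg.comp_affineMap _).subset (fun _ hu => hg.1.lineMap_mem ha hb hu) (convex_Icc 0 1)
  have hderiv : HasDerivAt (g ∘ line) (fderiv ℝ g a (b - a)) 0 := by
    have hd : HasFDerivAt g (fderiv ℝ g a) (line 0) := by simpa [line] using hdiff.hasFDerivAt
    exact hd.comp_hasDerivAt 0 AffineMap.hasDerivAt_lineMap
  have := hline.le_slope_of_hasDerivAt (by simp) (by simp) zero_lt_one hderiv
  simp only [slope_def_field, Function.comp_apply, line, AffineMap.lineMap_apply_zero,
    AffineMap.lineMap_apply_one, sub_zero, div_one] at this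
  linarith

lemma ConvexOn.le_apply_zero_of_bddAbove {f : ℝ → ℝ} (hf : ConvexOn ℝ (Ici 0) f)
    (hbdd : BddAbove (f '' Ici 0)) {σ : ℝ} (hσ : 0 ≤ σ) : f σ ≤ f 0 := by
  obtain ⟨C, hC⟩ := hbdd
  have hC' : ∀ τ, 0 ≤ τ → f τ ≤ C := fun τ hτ => hC ⟨τ, hτ, rfl⟩
  have hbound : ∀ᶠ τ in atTop, f σ ≤ f 0 + σ / τ * (C - f 0) := by
    filter_upwards [eventually_gt_atTop σ, eventually_gt_atTop 0] with τ hστ hτ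
    have hw : σ / τ ∈ Icc (0 : ℝ) 1 := ⟨div_nonneg hσ hτ.le, (div_le_one hτ).2 hστ.le⟩
    have := hf.2 (mem_Ici.2 le_rfl) (mem_Ici.2 hτ.le) (sub_nonneg.2 hw.2) hw.1 (by ring)
    have hσeq : (1 - σ / τ) • (0 : ℝ) + (σ / τ) • τ = σ := by
      simp [smul_eq_mul, div_mul_cancel₀ σ hτ.ne']
    rw [hσeq, smul_eq_mul, smul_eq_mul] at this
    nlinarith [hC' τ hτ.le, hw.1]
  have hlim : Tendsto (fun τ => f 0 + σ / τ * (C - f 0)) atTop (𝓝 (f 0)) := by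
    simpa using (tendsto_const_nhds.div_atTop tendsto_id).mul_const (C - f 0) |>.const_add (f 0)
  exact ge_of_tendsto hlim hbound

lemma Convex.subset_interior_of_tendsto_atTop_frontier {s : Set V} {g : V → ℝ}
    (hs : Convex ℝ s) (hne : (interior s).Nonempty) (hg : ConvexOn ℝ s g)
    (hbl : ∀ t ∈ frontier (interior s), Tendsto g (𝓝[interior s] t) atTop) :
    s ⊆ interior s := by
  obtain ⟨c, hc⟩ := hne
  intro t ht
  by_contra hnot
  let line : ℝ →ᵃ[ℝ] V := AffineMap.lineMap t c
  have hseg : ∀ θ ∈ Ioo (0 : ℝ) 1, line θ ∈ interior s ∧ g (line θ) ≤ max (g t) (g c) := by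
    rintro θ ⟨hθ0, hθ1⟩
    rw [show line θ = (1 - θ) • t + θ • c from AffineMap.lineMap_apply_module t c θ]
    refine ⟨hs.combo_closure_interior_mem_interior (subset_closure ht) hc
      (sub_nonneg.2 hθ1.le) hθ0 (by ring), ?_⟩
    have := hg.2 ht (interior_subset hc) (sub_nonneg.2 hθ1.le) hθ0.le (sub_add_cancel 1 θ)
    simp only [smul_eq_mul] at this
    nlinarith [le_max_left (g t) (g c), le_max_right (g t) (g c)]
  have hnear : ∀ᶠ θ in 𝓝[>] (0 : ℝ), θ ∈ Ioo (0 : ℝ) 1 := Ioo_mem_nhdsGT zero_lt_one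
  have hline : Tendsto line (𝓝[>] 0) (𝓝[interior s] t) := by
    refine tendsto_nhdsWithin_iff.2 ⟨?_, hnear.mono fun θ hθ => (hseg θ hθ).1⟩
    have : Tendsto line (𝓝 0) (𝓝 (line 0)) := line.continuous_of_finiteDimensional.tendsto 0
    simpa [line] using this.mono_left nhdsWithin_le_nhds
  have hfr : t ∈ frontier (interior s) := by
    refine ⟨?_, by rwa [interior_interior]⟩
    exact mem_closure_of_tendsto (tendsto_nhds_of_tendsto_nhdsWithin hline)
      (hnear.mono fun θ hθ => (hseg θ hθ).1)
  obtain ⟨θ, hθbig, hθ⟩ := (((hbl t hfr).comp hline).eventually_gt_atTop (max (g t) (g c))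
    |>.and hnear).exists
  exact (hseg θ hθ).2.not_gt hθbig

end ConvexAnalysis

lemma ContinuousOn.isClosed_sublevel_of_tendsto_atTop_frontier {X : Type*} [TopologicalSpace X]
    {U : Set X} {g : X → ℝ} (hU : IsOpen U) (hcont : ContinuousOn g U)
    (hbl : ∀ t ∈ frontier U, Tendsto g (𝓝[U] t) atTop) (M : ℝ) :
    IsClosed {t | t ∈ U ∧ g t ≤ M} := by
  have hsub : {t | t ∈ U ∧ g t ≤ M} ⊆ U := fun _ hs => hs.1
  refine isClosed_of_closure_subset fun t ht => ?_
  have hne : (𝓝[{t | t ∈ U ∧ g t ≤ M}] t).NeBot := mem_closure_iff_nhdsWithin_neBot.1 ht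
  have hle : ∀ᶠ s in 𝓝[{t | t ∈ U ∧ g t ≤ M}] t, g s ≤ M :=
    eventually_nhdsWithin_of_forall fun s hs => hs.2
  by_cases htU : t ∈ U
  · refine ⟨htU, le_of_tendsto ?_ hle⟩
    exact (hcont.continuousAt (hU.mem_nhds htU)).tendsto.mono_left nhdsWithin_le_nhds
  · have hfr : t ∈ frontier U :=
      ⟨closure_mono hsub ht, by rwa [hU.interior_eq]⟩
    have hbig := ((hbl t hfr).mono_left (nhdsWithin_mono t hsub)).eventually_gt_atTop M
    obtain ⟨s, hs1, hs2⟩ := (hbig.and hle).exists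
    exact absurd hs2 hs1.not_ge

section Recession

variable {V ι : Type*} [NormedAddCommGroup V] [NormedSpace ℝ V] [Fintype ι]

def nonnegSupp (s : Finset ι) : Set (ι → ℝ) := {a | 0 ≤ a ∧ ∀ i ∉ s, a i = 0}

lemma LinearMap.isClosed_image_nonnegSupp_of_injOn (T : (ι → ℝ) →ₗ[ℝ] V) (s : Finset ι)
    (hinj : ∀ a : ι → ℝ, (∀ i ∉ s, a i = 0) → T a = 0 → a = 0) :
    IsClosed (T '' nonnegSupp s) := by
  let P : Submodule ℝ (ι → ℝ) :=
    LinearMap.ker (LinearMap.pi fun i : {i // i ∉ s} => LinearMap.proj (R := ℝ) i.1)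
  have hP : ∀ a, a ∈ P ↔ ∀ i ∉ s, a i = 0 := fun a => by simp [P, funext_iff]
  have hker : LinearMap.ker (T.domRestrict P) = ⊥ :=
    LinearMap.ker_eq_bot'.2 fun a ha => Subtype.ext (hinj a ((hP a).1 a.2) ha)
  have himage : T '' nonnegSupp s = T.domRestrict P '' {a : P | 0 ≤ (a : ι → ℝ)} := by
    ext v
    constructor
    · rintro ⟨a, ⟨ha0, has⟩, rfl⟩
      exact ⟨⟨a, (hP a).2 has⟩, ha0, rfl⟩
    · rintro ⟨a, ha0, rfl⟩
      exact ⟨a, ⟨ha0, (hP a).1 a.2⟩, rfl⟩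
  rw [himage]
  exact (LinearMap.isClosedEmbedding_of_injective hker).isClosedMap _
    (isClosed_le continuous_const continuous_subtype_val)

/-- Carathéodory: moving along a kernel vector `ν` of `T` until a first coordinate of `a` hits
zero removes one vector from the nonnegative combination `T a`. -/
lemma LinearMap.image_nonnegSupp_eq_biUnion [DecidableEq ι] (T : (ι → ℝ) →ₗ[ℝ] V)
    {s : Finset ι} {ν : ι → ℝ} (hνs : ∀ i ∉ s, ν i = 0) (hTν : T ν = 0) {j : ι} (hj : ν j < 0) :
    T '' nonnegSupp s = ⋃ k ∈ s, T '' nonnegSupp (s.erase k) := by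
  refine subset_antisymm ?_ (iUnion₂_subset fun k _ => image_mono fun a ⟨ha0, has⟩ =>
    ⟨ha0, fun i hi => has i fun h => hi (Finset.mem_of_mem_erase h)⟩)
  rintro _ ⟨a, ⟨ha0, has⟩, rfl⟩
  obtain ⟨k, hk, hkmin⟩ := Finset.exists_min_image {i | ν i < 0} (fun i => a i / -ν i)
    ⟨j, by simpa using hj⟩
  simp only [Finset.mem_filter, Finset.mem_univ, true_and] at hk hkmin
  set c := a k / -ν k
  have hks : k ∈ s := by_contra fun h => hk.ne (hνs k h)
  have hak : a k + c * ν k = 0 := by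
    rw [div_mul_eq_mul_div, div_neg, mul_div_assoc, div_self hk.ne, mul_one, add_neg_cancel]
  refine mem_biUnion hks ⟨a + c • ν, ⟨fun i => ?_, fun i hi => ?_⟩, by simp [hTν]⟩
  · have hc : 0 ≤ c := div_nonneg (ha0 k) (by linarith)
    have hai : 0 ≤ a i := ha0 i
    show 0 ≤ a i + c * ν i
    rcases le_or_gt 0 (ν i) with hνi | hνi
    · nlinarith [mul_nonneg hc hνi]
    · have := hkmin i hνi
      rw [le_div_iff₀ (by linarith)] at this
      linarith
  · show a i + c * ν i = 0
    by_cases hik : i = k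
    · rw [hik, hak]
    · have his : i ∉ s := fun h => hi (Finset.mem_erase.2 ⟨hik, h⟩)
      rw [has i his, hνs i his, mul_zero, add_zero]

lemma LinearMap.isClosed_image_nonnegSupp [DecidableEq ι] (T : (ι → ℝ) →ₗ[ℝ] V)
    (s : Finset ι) : IsClosed (T '' nonnegSupp s) := by
  induction s using Finset.strongInduction with
  | _ s ih =>
  by_cases hinj : ∀ a : ι → ℝ, (∀ i ∉ s, a i = 0) → T a = 0 → a = 0
  · exact T.isClosed_image_nonnegSupp_of_injOn s hinj
  push Not at hinj
  obtain ⟨ν, hνs, hTν, hνne⟩ := hinj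
  obtain ⟨j, hj⟩ := Function.ne_iff.1 hνne
  have hunion : T '' nonnegSupp s = ⋃ k ∈ s, T '' nonnegSupp (s.erase k) := by
    rcases (Ne.lt_or_gt hj : ν j < 0 ∨ 0 < ν j) with hneg | hpos
    · exact T.image_nonnegSupp_eq_biUnion hνs hTν hneg
    · exact T.image_nonnegSupp_eq_biUnion (ν := -ν) (fun i hi => by simp [hνs i hi])
        (by simp [hTν]) (by simpa using hpos)
  rw [hunion]
  exact s.finite_toSet.isClosed_biUnion fun k hk => ih _ (Finset.erase_ssubset hk)

lemma LinearMap.isClosed_image_nonneg (T : (ι → ℝ) →ₗ[ℝ] V) : IsClosed (T '' {a | 0 ≤ a}) := by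
  classical
  simpa [nonnegSupp] using T.isClosed_image_nonnegSupp Finset.univ

lemma exists_ray_subset_of_not_isBounded [FiniteDimensional ℝ V] {B : Set V} (hconv : Convex ℝ B)
    (hclosed : IsClosed B) (hunb : ¬ Bornology.IsBounded B) {z₀ : V} (hz₀ : z₀ ∈ B) :
    ∃ d : V, d ≠ 0 ∧ ∀ σ : ℝ, 0 ≤ σ → z₀ + σ • d ∈ B := by
  have hfar : ∀ k : ℕ, ∃ z ∈ B, (k : ℝ) + 1 ≤ ‖z - z₀‖ := by
    intro k
    by_contra! h
    exact hunb ((Metric.isBounded_closedBall (x := z₀) (r := k + 1)).subset fun z hz =>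
      mem_closedBall_iff_norm.2 (h z hz).le)
  choose z hzB hzfar using hfar
  have hτ : ∀ k, 0 < ‖z k - z₀‖ := fun k => by linarith [hzfar k, (k.cast_nonneg : (0 : ℝ) ≤ k)]
  have hsphere : ∀ k, ‖z k - z₀‖⁻¹ • (z k - z₀) ∈ Metric.sphere (0 : V) 1 := fun k => by
    rw [mem_sphere_zero_iff_norm, norm_smul, norm_inv, norm_norm, inv_mul_cancel₀ (hτ k).ne']
  obtain ⟨d, hd, φ, hφ, hlim⟩ := (isCompact_sphere (0 : V) 1).tendsto_subseq hsphere
  refine ⟨d, ne_zero_of_mem_unit_sphere ⟨d, hd⟩, fun σ hσ => ?_⟩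
  have hτφ : Tendsto (fun l => ‖z (φ l) - z₀‖) atTop atTop :=
    tendsto_atTop_mono (fun l => (hzfar (φ l)).trans' (by
      exact_mod_cast Nat.succ_le_succ (hφ.id_le l)))
      (tendsto_atTop_add_const_right _ 1 tendsto_natCast_atTop_atTop)
  refine hclosed.mem_of_tendsto ((hlim.const_smul σ).const_add z₀) ?_
  filter_upwards [hτφ.eventually_ge_atTop σ] with l hl
  have hθ : σ / ‖z (φ l) - z₀‖ ∈ Icc (0 : ℝ) 1 :=
    ⟨div_nonneg hσ (hτ _).le, (div_le_one (hτ _)).2 hl⟩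
  convert hconv.lineMap_mem hz₀ (hzB (φ l)) hθ using 1
  rw [AffineMap.lineMap_apply_module', Function.comp_apply, smul_smul, div_eq_mul_inv, add_comm]

end Recession

lemma eq_zero_of_forall_abs_add_mul_le {c d B : ℝ} (h : ∀ σ : ℝ, 0 ≤ σ → |c + σ * d| ≤ B) :
    d = 0 := by
  by_contra hd
  have hpos : 0 < |d| := abs_pos.2 hd
  have hB : |c| ≤ B := by simpa using h 0 le_rfl
  set σ := (B + |c| + 1) / |d|
  have hσ : σ * |d| = B + |c| + 1 := div_mul_cancel₀ _ hpos.ne'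
  have hσ0 : 0 ≤ σ := div_nonneg (by linarith [abs_nonneg c]) hpos.le
  have hfar : |σ * d| - |c| ≤ |c + σ * d| := by
    simpa [add_comm] using abs_sub_abs_le_abs_sub (σ * d) (-c)
  rw [abs_mul, abs_of_nonneg hσ0, hσ] at hfar
  linarith [h σ hσ0]

section Objective

variable {κ ι : Type*}

def feasibleSet (S : Finset ι) : Set (ι → ℝ) := {x | ∀ i ∉ S, 0 ≤ x i}

def l1Red {S : Finset ι} (g : (κ → ℝ) → ℝ) (lam : ℝ) (z : (κ → ℝ) × (S → ℝ)) : ℝ :=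
  g z.1 + lam * ∑ j, |z.2 j|

variable {g : (κ → ℝ) → ℝ} {S : Finset ι} {lam : ℝ} {U : Set (κ → ℝ)}

lemma convex_feasibleSet : Convex ℝ (feasibleSet S) := fun x hx y hy a b ha hb _ i hi => by
  simpa using add_nonneg (mul_nonneg ha (hx i hi)) (mul_nonneg hb (hy i hi))

lemma convexOn_l1Red (hg : ConvexOn ℝ U g) (hlam : 0 ≤ lam) :
    ConvexOn ℝ (Prod.fst ⁻¹' U) (l1Red (S := S) g lam) := by
  have habs : ConvexOn ℝ univ fun z : (κ → ℝ) × (S → ℝ) => ∑ j, |z.2 j| := by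
    refine ⟨convex_univ, fun z _ w _ a b ha hb _ => ?_⟩
    simp only [Prod.smul_snd, Prod.snd_add, Pi.add_apply, Pi.smul_apply, smul_eq_mul,
      Finset.mul_sum, ← Finset.sum_add_distrib]
    refine Finset.sum_le_sum fun j _ => (abs_add_le _ _).trans_eq ?_
    rw [abs_mul, abs_mul, abs_of_nonneg ha, abs_of_nonneg hb]
  exact (hg.comp_linearMap (LinearMap.fst ℝ _ _)).add
    ((habs.smul hlam).subset (subset_univ _) (hg.1.linear_preimage _))

lemma feasibleSet_eq_image [DecidableEq ι] : feasibleSet S =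
    (LinearMap.funLeft ℝ ℝ (Sum.inl : ι → ι ⊕ ι) -
      (LinearMap.pi fun i : ι => if i ∈ S then (LinearMap.proj i : (ι → ℝ) →ₗ[ℝ] ℝ) else 0).comp
        (LinearMap.funLeft ℝ ℝ (Sum.inr : ι → ι ⊕ ι))) ''
      {a : ι ⊕ ι → ℝ | 0 ≤ a} := by
  ext x
  constructor
  · intro hx
    refine ⟨Sum.elim (fun i => max (x i) 0) (fun i => max (-x i) 0), fun k => ?_,
      funext fun i => ?_⟩
    · cases k <;> simp
    · by_cases hi : i ∈ S
      · simp [hi, max_zero_sub_max_neg_zero_eq_self]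
      · simp [hi, hx i hi]
  · rintro ⟨a, ha, rfl⟩ i hi
    simpa [hi] using ha (Sum.inl i)

variable [Fintype ι]

def l1Obj (g : (κ → ℝ) → ℝ) (E : Matrix κ ι ℝ) (S : Finset ι) (lam : ℝ) (x : ι → ℝ) : ℝ :=
  g (E *ᵥ x) + lam * ∑ i ∈ S, |x i|

/-- `l1Obj = l1Red ∘ l1Data`. The coordinates of the iterates outside `S` need not stay bounded,
so boundedness is proved for this image. -/
def l1Data (E : Matrix κ ι ℝ) (S : Finset ι) : (ι → ℝ) →ₗ[ℝ] (κ → ℝ) × (S → ℝ) :=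
  E.mulVecLin.prod (LinearMap.funLeft ℝ ℝ Subtype.val)

variable {E : Matrix κ ι ℝ}

lemma l1Red_l1Data (x : ι → ℝ) : l1Red g lam (l1Data E S x) = l1Obj g E S lam x := by
  show g (E *ᵥ x) + lam * ∑ j : S, |x j| = _
  rw [Finset.sum_coe_sort S fun i => |x i|]
  rfl

lemma isClosed_l1Data_image_feasibleSet [Fintype κ] : IsClosed (l1Data E S '' feasibleSet S) := by
  classical
  rw [feasibleSet_eq_image, ← image_comp, ← LinearMap.coe_comp]
  exact LinearMap.isClosed_image_nonneg _

def l1RedSublevel (g : (κ → ℝ) → ℝ) (E : Matrix κ ι ℝ) (S : Finset ι) (lam : ℝ)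
    (U : Set (κ → ℝ)) (M : ℝ) : Set ((κ → ℝ) × (S → ℝ)) :=
  {z | z ∈ l1Data E S '' feasibleSet S ∩ Prod.fst ⁻¹' U ∧ l1Red g lam z ≤ M}

lemma l1Data_mem_l1RedSublevel {x : ι → ℝ} (hx : x ∈ feasibleSet S) (hxU : E *ᵥ x ∈ U) {M : ℝ}
    (hxM : l1Obj g E S lam x ≤ M) : l1Data E S x ∈ l1RedSublevel g E S lam U M :=
  ⟨⟨mem_image_of_mem _ hx, hxU⟩, (l1Red_l1Data x).trans_le hxM⟩

lemma exists_of_mem_l1RedSublevel {z : (κ → ℝ) × (S → ℝ)} {M : ℝ}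
    (hz : z ∈ l1RedSublevel g E S lam U M) :
    ∃ y ∈ feasibleSet S, E *ᵥ y ∈ U ∧ l1Data E S y = z ∧ l1Obj g E S lam y ≤ M := by
  obtain ⟨⟨⟨y, hy, rfl⟩, hyU⟩, hyM⟩ := hz
  exact ⟨y, hy, hyU, rfl, (l1Red_l1Data y).symm.trans_le hyM⟩

lemma convex_l1RedSublevel (hg : ConvexOn ℝ U g) (hlam : 0 ≤ lam) (M : ℝ) :
    Convex ℝ (l1RedSublevel g E S lam U M) :=
  ((convexOn_l1Red hg hlam).subset inter_subset_right ((convex_feasibleSet.linear_image _).inter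
    (hg.1.linear_preimage (LinearMap.fst ℝ _ _)))).convex_le M

lemma isClosed_l1RedSublevel [Fintype κ] (hlam : 0 ≤ lam) (hcont : ContinuousOn g U)
    (hsub : ∀ M, IsClosed {t | t ∈ U ∧ g t ≤ M}) (M : ℝ) :
    IsClosed (l1RedSublevel g E S lam U M) := by
  have hgz : ∀ z : (κ → ℝ) × (S → ℝ), g z.1 ≤ l1Red g lam z := fun z =>
    le_add_of_nonneg_right (mul_nonneg hlam (Finset.sum_nonneg fun _ _ => abs_nonneg _))
  have hcontRed : ContinuousOn (l1Red (S := S) g lam) (Prod.fst ⁻¹' U) :=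
    (hcont.comp continuousOn_fst fun _ h => h).add (by fun_prop)
  convert (hcontRed.mono fun z hz => hz.2.1).preimage_isClosed_of_isClosed
    (isClosed_l1Data_image_feasibleSet.inter ((hsub M).preimage continuous_fst))
    isClosed_Iic using 1
  ext z
  exact ⟨fun ⟨⟨hQ, hU⟩, hM⟩ => ⟨⟨hQ, hU, (hgz z).trans hM⟩, hM⟩,
    fun ⟨⟨hQ, hU, _⟩, hM⟩ => ⟨⟨hQ, hU⟩, hM⟩⟩

/-- Along a ray of bounded objective value the convex objective cannot decrease, so the whole ray
consists of minimizers; uniqueness of `E x*` and `lam > 0` then pin both components. -/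
lemma eq_zero_of_ray_subset_l1RedSublevel (hlam : 0 < lam) (hg : ConvexOn ℝ U g) {xs : ι → ℝ}
    (hmin : ∀ y ∈ feasibleSet S, E *ᵥ y ∈ U → l1Obj g E S lam xs ≤ l1Obj g E S lam y)
    (huniq : ∀ y ∈ feasibleSet S, E *ᵥ y ∈ U → l1Obj g E S lam y = l1Obj g E S lam xs →
      E *ᵥ y = E *ᵥ xs) {M : ℝ} {d : (κ → ℝ) × (S → ℝ)}
    (hray : ∀ σ : ℝ, 0 ≤ σ → l1Data E S xs + σ • d ∈ l1RedSublevel g E S lam U M) : d = 0 := by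
  set z₀ := l1Data E S xs
  have hmax : ∀ σ : ℝ, 0 ≤ σ → l1Red g lam (z₀ + σ • d) ≤ l1Obj g E S lam xs := by
    intro σ hσ
    have hline : ConvexOn ℝ (Ici 0) fun σ : ℝ => l1Red g lam (z₀ + σ • d) := by
      refine (((convexOn_l1Red hg hlam.le).comp_affineMap (AffineMap.lineMap z₀ (z₀ + d))).subset
        (fun σ hσ => ?_) (convex_Ici 0)).congr fun σ _ => ?_
      · simpa [AffineMap.lineMap_apply_module', add_comm] using (hray σ hσ).1.2
      · simp [AffineMap.lineMap_apply_module', add_comm]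
    simpa [z₀, l1Red_l1Data] using hline.le_apply_zero_of_bddAbove
      ⟨M, fun _ ⟨σ, hσ, h⟩ => h ▸ (hray σ hσ).2⟩ hσ
  have hfst : ∀ σ : ℝ, 0 ≤ σ → (z₀ + σ • d).1 = z₀.1 := by
    intro σ hσ
    obtain ⟨y, hy, hyU, hyz, -⟩ := exists_of_mem_l1RedSublevel (hray σ hσ)
    have hFy : l1Obj g E S lam y = l1Obj g E S lam xs := by
      refine le_antisymm ?_ (hmin y hy hyU)
      rw [← l1Red_l1Data, hyz]
      exact hmax σ hσ
    rw [← hyz]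
    exact huniq y hy hyU hFy
  have hd₁ : d.1 = 0 := by simpa using hfst 1 zero_le_one
  have hd₂ : d.2 = 0 := funext fun j => eq_zero_of_forall_abs_add_mul_le (B := ∑ j, |z₀.2 j|)
    fun σ hσ => by
      have h := hmax σ hσ
      rw [← l1Red_l1Data, l1Red, l1Red, hfst σ hσ] at h
      exact (Finset.single_le_sum (fun j _ => abs_nonneg ((z₀ + σ • d).2 j))
        (Finset.mem_univ j)).trans (le_of_mul_le_mul_left (by linarith) hlam)
  exact Prod.ext hd₁ hd₂

lemma isBounded_l1RedSublevel [Fintype κ] (hlam : 0 < lam) (hg : ConvexOn ℝ U g)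
    (hcont : ContinuousOn g U) (hsub : ∀ M, IsClosed {t | t ∈ U ∧ g t ≤ M}) {xs : ι → ℝ}
    (hxs : xs ∈ feasibleSet S) (hxsU : E *ᵥ xs ∈ U)
    (hmin : ∀ y ∈ feasibleSet S, E *ᵥ y ∈ U → l1Obj g E S lam xs ≤ l1Obj g E S lam y)
    (huniq : ∀ y ∈ feasibleSet S, E *ᵥ y ∈ U → l1Obj g E S lam y = l1Obj g E S lam xs →
      E *ᵥ y = E *ᵥ xs) (M : ℝ) :
    Bornology.IsBounded (l1RedSublevel g E S lam U M) := by
  by_contra hunb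
  obtain ⟨z, hz⟩ : (l1RedSublevel g E S lam U M).Nonempty :=
    nonempty_iff_ne_empty.2 fun h => hunb (h ▸ Bornology.isBounded_empty)
  obtain ⟨y, hy, hyU, -, hyM⟩ := exists_of_mem_l1RedSublevel hz
  obtain ⟨d, hd, hray⟩ := exists_ray_subset_of_not_isBounded (convex_l1RedSublevel hg hlam.le M)
    (isClosed_l1RedSublevel hlam.le hcont hsub M) hunb
    (l1Data_mem_l1RedSublevel hxs hxsU ((hmin y hy hyU).trans hyM))
  exact hd (eq_zero_of_ray_subset_l1RedSublevel hlam hg hmin huniq hray)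

end Objective

section Fermat

variable {f : ℝ → ℝ} {a b : ℝ}

lemma IsLocalMinOn.nonneg_of_hasDerivAt_Ici (h : IsLocalMinOn f (Ici a) a)
    (hf : HasDerivAt f b a) : 0 ≤ b := by
  have hseg : segment ℝ a (a + 1) ⊆ Ici a := by
    rw [segment_eq_Icc (by linarith)]
    exact Icc_subset_Ici_self
  simpa using h.hasFDerivWithinAt_nonneg hf.hasFDerivAt.hasFDerivWithinAt
    (mem_posTangentConeAt_of_segment_subset hseg)

lemma IsLocalMinOn.nonpos_of_hasDerivAt_Iic (h : IsLocalMinOn f (Iic a) a)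
    (hf : HasDerivAt f b a) : b ≤ 0 := by
  have hseg : segment ℝ a (a + -1) ⊆ Iic a := by
    rw [segment_symm, segment_eq_Icc (by linarith)]
    exact Icc_subset_Iic_self
  simpa using h.hasFDerivWithinAt_nonneg hf.hasFDerivAt.hasFDerivWithinAt
    (mem_posTangentConeAt_of_segment_subset hseg)

lemma abs_le_and_mul_eq_of_isLocalMin_add_abs {lam : ℝ} (hlam : 0 ≤ lam) (hf : HasDerivAt f b a)
    (hmin : IsLocalMin (fun s => f s + lam * |s|) a) : |b| ≤ lam ∧ b * a = -(lam * |a|) := by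
  -- majorize `|s|` on each side of `a` by an affine function touching it at `a`
  have hright : 0 ≤ b + lam * 1 := by
    refine IsLocalMinOn.nonneg_of_hasDerivAt_Ici (f := fun s => f s + lam * (|a| + (s - a))) ?_
      (hf.add ((((hasDerivAt_id' a).sub_const a).const_add |a|).const_mul lam))
    filter_upwards [hmin.on (Ici a), self_mem_nhdsWithin] with s hs (has : a ≤ s)
    have := abs_sub_abs_le_abs_sub s a
    rw [abs_of_nonneg (sub_nonneg.2 has)] at this
    simp only [sub_self, add_zero] at hs ⊢
    nlinarith [mul_le_mul_of_nonneg_left (show |s| ≤ |a| + (s - a) by linarith) hlam]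
  have hleft : b + lam * -1 ≤ 0 := by
    refine IsLocalMinOn.nonpos_of_hasDerivAt_Iic (f := fun s => f s + lam * (|a| - (s - a))) ?_
      (hf.add ((((hasDerivAt_id' a).sub_const a).const_sub |a|).const_mul lam))
    filter_upwards [hmin.on (Iic a), self_mem_nhdsWithin] with s hs (hsa : s ≤ a)
    have := abs_sub_abs_le_abs_sub s a
    rw [abs_of_nonpos (sub_nonpos.2 hsa)] at this
    simp only [sub_self, sub_zero] at hs ⊢
    nlinarith [mul_le_mul_of_nonneg_left (show |s| ≤ |a| - (s - a) by linarith) hlam]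
  refine ⟨abs_le.2 ⟨by linarith, by linarith⟩, ?_⟩
  rcases lt_trichotomy a 0 with ha | rfl | ha
  · have hb : b + lam * -1 = 0 := by
      refine (hmin.congr ?_).hasDerivAt_eq_zero (hf.add ((hasDerivAt_neg a).const_mul lam))
      filter_upwards [eventually_lt_nhds ha] with s hs
      rw [abs_of_neg hs]
      rfl
    rw [abs_of_neg ha]
    linear_combination a * hb
  · simp
  · have hb : b + lam * 1 = 0 := by
      refine (hmin.congr ?_).hasDerivAt_eq_zero (hf.add ((hasDerivAt_id' a).const_mul lam))
      filter_upwards [eventually_gt_nhds ha] with s hs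
      rw [abs_of_pos hs]
      rfl
    rw [abs_of_pos ha]
    linear_combination a * hb

lemma nonneg_and_mul_eq_zero_of_isLocalMinOn_Ici (ha : 0 ≤ a) (hf : HasDerivAt f b a)
    (hmin : IsLocalMinOn f (Ici 0) a) : 0 ≤ b ∧ b * a = 0 := by
  refine ⟨(hmin.on_subset (Ici_subset_Ici.2 ha)).nonneg_of_hasDerivAt_Ici hf, ?_⟩
  rcases ha.eq_or_lt with rfl | ha
  · simp
  · rw [(hmin.isLocalMin (Ici_mem_nhds ha)).hasDerivAt_eq_zero hf, zero_mul]

end Fermat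

section CoordinateMinimization

variable {κ ι : Type*} {g : (κ → ℝ) → ℝ} {E : Matrix κ ι ℝ} {S : Finset ι}
  {lam : ℝ} {U : Set (κ → ℝ)}

/-- First-order optimality of `a` for `min_s b * s + lam * |s|` (if `i ∈ S`), resp.
`min_{s ≥ 0} b * s` (if `i ∉ S`). -/
def CoordKKT (S : Finset ι) (lam : ℝ) (i : ι) (b a : ℝ) : Prop :=
  (i ∈ S → |b| ≤ lam ∧ b * a = -(lam * |a|)) ∧ (i ∉ S → 0 ≤ b ∧ b * a = 0)

lemma CoordKKT.mul_sub_add_nonneg [DecidableEq ι] {i : ι} {b a y : ℝ} (h : CoordKKT S lam i b a)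
    (hy : i ∉ S → 0 ≤ y) : 0 ≤ b * (y - a) + if i ∈ S then lam * (|y| - |a|) else 0 := by
  by_cases hi : i ∈ S
  · obtain ⟨hb, hba⟩ := h.1 hi
    have : |b * y| ≤ lam * |y| := by
      rw [abs_mul]
      exact mul_le_mul_of_nonneg_right hb (abs_nonneg y)
    rw [if_pos hi]
    nlinarith [neg_abs_le (b * y)]
  · obtain ⟨hb, hba⟩ := h.2 hi
    rw [if_neg hi, add_zero, mul_sub, hba, sub_zero]
    exact mul_nonneg hb (hy hi)

lemma mulVec_eq_sum_smul_col [Fintype ι] (v : ι → ℝ) : E *ᵥ v = ∑ i, v i • E.col i := by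
  ext k
  simp [Matrix.mulVec, dotProduct, mul_comm]

lemma mulVec_update [Fintype ι] [DecidableEq ι] (p : ι → ℝ) (i : ι) (s : ℝ) :
    E *ᵥ Function.update p i s = E *ᵥ p + (s - p i) • E.col i := by
  have : Function.update p i s = p + (s - p i) • Pi.single i 1 := by
    ext j
    by_cases h : j = i
    · subst h; simp
    · simp [h]
  rw [this, Matrix.mulVec_add, Matrix.mulVec_smul, Matrix.mulVec_single_one]

lemma sum_abs_update [DecidableEq ι] (p : ι → ℝ) (i : ι) (s : ℝ) :
    ∑ j ∈ S, |Function.update p i s j| = ∑ j ∈ S, |p j| + if i ∈ S then |s| - |p i| else 0 := by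
  simp_rw [Function.apply_update (fun _ x => |x|) p i s]
  by_cases hi : i ∈ S
  · rw [Finset.sum_update_of_mem hi, Finset.sum_eq_add_sum_sdiff_singleton_of_mem hi, if_pos hi]
    ring
  · rw [Finset.sum_update_of_notMem hi, if_neg hi, add_zero]

lemma coordKKT_of_coordMin [Fintype κ] [Fintype ι] [DecidableEq ι] (hlam : 0 ≤ lam)
    (hU : IsOpen U) {p : ι → ℝ} (hp : p ∈ feasibleSet S) (hpU : E *ᵥ p ∈ U)
    (hdiff : DifferentiableAt ℝ g (E *ᵥ p)) {i : ι}
    (hmin : ∀ y ∈ feasibleSet S, (∀ j ≠ i, y j = p j) → E *ᵥ y ∈ U →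
      l1Obj g E S lam p ≤ l1Obj g E S lam y) :
    CoordKKT S lam i (fderiv ℝ g (E *ᵥ p) (E.col i)) (p i) := by
  set φ : ℝ → ℝ := fun s => g (E *ᵥ Function.update p i s)
  have hline : HasDerivAt (fun s => E *ᵥ p + (s - p i) • E.col i) (E.col i) (p i) := by
    simpa using (((hasDerivAt_id' (p i)).sub_const (p i)).smul_const (E.col i)).const_add
      (E *ᵥ p)
  have hφ : HasDerivAt φ (fderiv ℝ g (E *ᵥ p) (E.col i)) (p i) := by
    have hg : HasFDerivAt g (fderiv ℝ g (E *ᵥ p)) (E *ᵥ p + (p i - p i) • E.col i) := by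
      simpa using hdiff.hasFDerivAt
    simpa only [φ, mulVec_update, Function.comp_def] using hg.comp_hasDerivAt (p i) hline
  have hnear : ∀ᶠ s in 𝓝 (p i), E *ᵥ Function.update p i s ∈ U := by
    simp_rw [mulVec_update]
    exact hline.continuousAt.preimage_mem_nhds (hU.mem_nhds (by simpa using hpU))
  have hval : ∀ s, E *ᵥ Function.update p i s ∈ U → (i ∉ S → 0 ≤ s) →
      φ (p i) + lam * (if i ∈ S then |p i| else 0) ≤ φ s + lam * (if i ∈ S then |s| else 0) := by
    intro s hsU hs
    have hfeas : Function.update p i s ∈ feasibleSet S := fun j hj => by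
      by_cases hji : j = i
      · subst hji; simpa using hs hj
      · simpa [hji] using hp j hj
    have := hmin _ hfeas (fun j hj => Function.update_of_ne hj s p) hsU
    simp only [l1Obj, sum_abs_update, φ, Function.update_eq_self] at this ⊢
    split_ifs at this ⊢ <;> linarith
  constructor
  · intro hi
    refine abs_le_and_mul_eq_of_isLocalMin_add_abs hlam hφ ?_
    filter_upwards [hnear] with s hs
    simpa [hi] using hval s hs (absurd hi)
  · intro hi
    refine nonneg_and_mul_eq_zero_of_isLocalMinOn_Ici (hp i hi) hφ ?_
    filter_upwards [nhdsWithin_le_nhds hnear, self_mem_nhdsWithin] with s hs (hs0 : 0 ≤ s)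
    simpa [hi] using hval s hs fun _ => hs0

/-- Gradient inequality at `p` combined with the coordinatewise KKT conditions. -/
lemma l1Obj_add_sum_le [Fintype κ] [Fintype ι] [DecidableEq ι] (hg : ConvexOn ℝ U g)
    {p xs : ι → ℝ} (hpU : E *ᵥ p ∈ U) (hdiff : DifferentiableAt ℝ g (E *ᵥ p))
    (hxs : xs ∈ feasibleSet S) (hxsU : E *ᵥ xs ∈ U)
    {b : ι → ℝ} (hkkt : ∀ i, CoordKKT S lam i (b i) (p i)) :
    l1Obj g E S lam p + ∑ i, (fderiv ℝ g (E *ᵥ p) (E.col i) - b i) * (xs i - p i) ≤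
      l1Obj g E S lam xs := by
  have hgrad := hg.add_fderiv_sub_le hpU hxsU hdiff
  rw [← Matrix.mulVec_sub, mulVec_eq_sum_smul_col (xs - p), map_sum] at hgrad
  have hbr : 0 ≤ ∑ i, (b i * (xs i - p i) + if i ∈ S then lam * (|xs i| - |p i|) else 0) :=
    Finset.sum_nonneg fun i _ => (hkkt i).mul_sub_add_nonneg (hxs i)
  rw [Finset.sum_add_distrib, Finset.sum_ite_mem, Finset.univ_inter, ← Finset.mul_sum,
    Finset.sum_sub_distrib] at hbr
  simp only [map_smul, smul_eq_mul, Pi.sub_apply] at hgrad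
  simp only [l1Obj, sub_mul, Finset.sum_sub_distrib]
  have : ∑ i, fderiv ℝ g (E *ᵥ p) (E.col i) * (xs i - p i) =
      ∑ i, (xs i - p i) * fderiv ℝ g (E *ᵥ p) (E.col i) :=
    Finset.sum_congr rfl fun i _ => mul_comm _ _
  linarith

end CoordinateMinimization

section CoordinateSteps

variable {κ ι : Type*} [Fintype ι] {g : (κ → ℝ) → ℝ} {E : Matrix κ ι ℝ}
  {S : Finset ι} {lam : ℝ} {U : Set (κ → ℝ)}

def IsCoordMinStep (g : (κ → ℝ) → ℝ) (E : Matrix κ ι ℝ) (S : Finset ι) (lam : ℝ)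
    (U : Set (κ → ℝ)) (i : ι) (x x' : ι → ℝ) : Prop :=
  x' ∈ feasibleSet S ∧ E *ᵥ x' ∈ U ∧ (∀ j, j ≠ i → x' j = x j) ∧
    ∀ y ∈ feasibleSet S, (∀ j, j ≠ i → y j = x j) → E *ᵥ y ∈ U →
      l1Obj g E S lam x' ≤ l1Obj g E S lam y

lemma g_le_l1Obj (hlam : 0 ≤ lam) (x : ι → ℝ) : g (E *ᵥ x) ≤ l1Obj g E S lam x :=
  le_add_of_nonneg_right (mul_nonneg hlam (Finset.sum_nonneg fun _ _ => abs_nonneg _))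

lemma mulVec_midpoint (x y : ι → ℝ) : E *ᵥ midpoint ℝ x y = midpoint ℝ (E *ᵥ x) (E *ᵥ y) := by
  rw [midpoint_real_eq, midpoint_real_eq, Matrix.mulVec_add, Matrix.mulVec_smul,
    Matrix.mulVec_smul]

lemma l1Obj_midpoint_le (hlam : 0 ≤ lam) (x y : ι → ℝ) :
    l1Obj g E S lam (midpoint ℝ x y) ≤
      (l1Obj g E S lam x + l1Obj g E S lam y) / 2 - midpointGap g (E *ᵥ x) (E *ᵥ y) := by
  have habs : ∑ i ∈ S, |midpoint ℝ x y i| ≤ (∑ i ∈ S, |x i| + ∑ i ∈ S, |y i|) / 2 := by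
    rw [← Finset.sum_add_distrib, Finset.sum_div]
    refine Finset.sum_le_sum fun i _ => ?_
    rw [midpoint_real_eq]
    simp only [Pi.add_apply, Pi.smul_apply, smul_eq_mul]
    linarith [abs_add_le ((1 / 2 : ℝ) * x i) ((1 / 2) * y i), abs_mul (1 / 2 : ℝ) (x i),
      abs_mul (1 / 2 : ℝ) (y i), abs_of_pos (by norm_num : (0 : ℝ) < 1 / 2)]
  simp only [l1Obj, midpointGap, mulVec_midpoint]
  nlinarith [mul_le_mul_of_nonneg_left habs hlam]

lemma midpointGap_le_of_le_midpoint (hlam : 0 ≤ lam) {x x' : ι → ℝ}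
    (h : l1Obj g E S lam x' ≤ l1Obj g E S lam (midpoint ℝ x x')) :
    midpointGap g (E *ᵥ x) (E *ᵥ x') ≤ (l1Obj g E S lam x - l1Obj g E S lam x') / 2 := by
  linarith [l1Obj_midpoint_le (g := g) (E := E) (S := S) hlam x x']

variable {i : ι} {x x' : ι → ℝ}

lemma IsCoordMinStep.l1Obj_le (h : IsCoordMinStep g E S lam U i x x') (hx : x ∈ feasibleSet S)
    (hxU : E *ᵥ x ∈ U) : l1Obj g E S lam x' ≤ l1Obj g E S lam x :=
  h.2.2.2 x hx (fun _ _ => rfl) hxU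

lemma IsCoordMinStep.midpointGap_le (h : IsCoordMinStep g E S lam U i x x') (hlam : 0 ≤ lam)
    (hUc : Convex ℝ U) (hx : x ∈ feasibleSet S) (hxU : E *ᵥ x ∈ U) :
    midpointGap g (E *ᵥ x) (E *ᵥ x') ≤ (l1Obj g E S lam x - l1Obj g E S lam x') / 2 := by
  refine midpointGap_le_of_le_midpoint hlam (h.2.2.2 _ (convex_feasibleSet.midpoint_mem hx h.1)
    (fun j hj => ?_) (by rw [mulVec_midpoint]; exact hUc.midpoint_mem hxU h.2.1))
  rw [midpoint_real_eq]
  simp [h.2.2.1 j hj, ← add_mul]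
  norm_num

lemma IsCoordMinStep.coordKKT [Fintype κ] [DecidableEq ι]
    (h : IsCoordMinStep g E S lam U i x x') (hlam : 0 ≤ lam) (hU : IsOpen U)
    (hdiff : DifferentiableAt ℝ g (E *ᵥ x')) :
    CoordKKT S lam i (fderiv ℝ g (E *ᵥ x') (E.col i)) (x' i) :=
  coordKKT_of_coordMin hlam hU h.1 h.2.1 hdiff fun y hy hyi hyU =>
    h.2.2.2 y hy (fun j hj => (hyi j hj).trans (h.2.2.1 j hj)) hyU

end CoordinateSteps

section Vanishing

variable {V ι : Type*} [NormedAddCommGroup V] [NormedSpace ℝ V] [Fintype ι] [DecidableEq ι]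
  {S : Finset ι} {Γ : ℕ → V →L[ℝ] ℝ} {Δ : ℕ → ι → V →L[ℝ] ℝ} {G : V →L[ℝ] ℝ}

/-- Complementary slackness forces each term with `G (w i) > 0` to vanish eventually; the others
are controlled by the bounded vector `∑ p i • w i`. -/
lemma tendsto_sum_compl_sub_mul_zero (hΓ : Tendsto Γ atTop (𝓝 G))
    (hΔ : ∀ i, Tendsto (fun l => Δ l i) atTop (𝓝 G)) (w : ι → V) {p : ℕ → ι → ℝ} {C : ℝ}
    (hW : ∀ l, ‖∑ i ∈ Sᶜ, p l i • w i‖ ≤ C)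
    (hkkt : ∀ l, ∀ i ∉ S, 0 ≤ Δ l i (w i) ∧ Δ l i (w i) * p l i = 0) :
    Tendsto (fun l => ∑ i ∈ Sᶜ, (Γ l (w i) - Δ l i (w i)) * p l i) atTop (𝓝 0) := by
  have hsplit : ∀ l, ∑ i ∈ Sᶜ, (Γ l (w i) - Δ l i (w i)) * p l i =
      (Γ l - G) (∑ i ∈ Sᶜ, p l i • w i) + ∑ i ∈ Sᶜ, (G (w i) - Δ l i (w i)) * p l i := by
    intro l
    simp only [map_sum, map_smul, smul_eq_mul, FunLike.coe_sub, Pi.sub_apply,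
      ← Finset.sum_add_distrib]
    exact Finset.sum_congr rfl fun i _ => by ring
  have hfirst : Tendsto (fun l => (Γ l - G) (∑ i ∈ Sᶜ, p l i • w i)) atTop (𝓝 0) := by
    refine squeeze_zero_norm (fun l => ((Γ l - G).le_opNorm _).trans
      (mul_le_mul_of_nonneg_left (hW l) (norm_nonneg _))) ?_
    simpa using (tendsto_iff_norm_sub_tendsto_zero.1 hΓ).mul_const C
  have hsecond : ∀ᶠ l in atTop, ∑ i ∈ Sᶜ, (G (w i) - Δ l i (w i)) * p l i = 0 := by
    have hterm : ∀ i ∈ Sᶜ, ∀ᶠ l in atTop, (G (w i) - Δ l i (w i)) * p l i = 0 := by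
      intro i hi
      rw [Finset.mem_compl] at hi
      have hlim : Tendsto (fun l => Δ l i (w i)) atTop (𝓝 (G (w i))) :=
        ((ContinuousLinearMap.apply ℝ ℝ (w i)).continuous.tendsto G).comp (hΔ i)
      rcases (ge_of_tendsto' hlim fun l => (hkkt l i hi).1).eq_or_lt with hG | hG
      · refine Eventually.of_forall fun l => ?_
        rw [← hG, zero_sub, neg_mul, (hkkt l i hi).2, neg_zero]
      · filter_upwards [hlim.eventually_const_lt hG] with l hl
        rw [(mul_eq_zero.1 (hkkt l i hi).2).resolve_left hl.ne', mul_zero]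
    filter_upwards [(Filter.eventually_all_finset _).2 hterm] with l hl
    exact Finset.sum_eq_zero hl
  simpa [hsplit] using hfirst.add (tendsto_const_nhds.congr' (hsecond.mono fun l h => h.symm))

lemma tendsto_sum_sub_mul_sub_zero (hΓ : Tendsto Γ atTop (𝓝 G))
    (hΔ : ∀ i, Tendsto (fun l => Δ l i) atTop (𝓝 G)) (w : ι → V) {p : ℕ → ι → ℝ} {C : ℝ}
    (hpS : ∀ l, ∀ i ∈ S, |p l i| ≤ C) (hpw : ∀ l, ‖∑ i, p l i • w i‖ ≤ C)
    (hkkt : ∀ l, ∀ i ∉ S, 0 ≤ Δ l i (w i) ∧ Δ l i (w i) * p l i = 0) (x : ι → ℝ) :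
    Tendsto (fun l => ∑ i, (Γ l (w i) - Δ l i (w i)) * (x i - p l i)) atTop (𝓝 0) := by
  have hdiff : ∀ i, Tendsto (fun l => Γ l (w i) - Δ l i (w i)) atTop (𝓝 0) := fun i => by
    have h := (ContinuousLinearMap.apply ℝ ℝ (w i)).continuous.tendsto G
    simpa using (h.comp hΓ).sub (h.comp (hΔ i))
  have hx : Tendsto (fun l => ∑ i, (Γ l (w i) - Δ l i (w i)) * x i) atTop (𝓝 0) := by
    simpa using tendsto_finsetSum Finset.univ fun i _ => (hdiff i).mul_const (x i)
  have hS : Tendsto (fun l => ∑ i ∈ S, (Γ l (w i) - Δ l i (w i)) * p l i) atTop (𝓝 0) := by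
    simpa using tendsto_finsetSum S fun i hi => (hdiff i).zero_mul_isBoundedUnder_le
      (isBoundedUnder_of ⟨C, fun l => (hpS l i hi : ‖p l i‖ ≤ C)⟩)
  have hW : ∀ l, ‖∑ i ∈ Sᶜ, p l i • w i‖ ≤ C + ∑ i ∈ S, C * ‖w i‖ := fun l => by
    have h := hpw l
    rw [← Finset.sum_add_sum_compl S] at h
    refine (norm_le_add_norm_add _ (∑ i ∈ S, p l i • w i)).trans
      (add_le_add (by rwa [add_comm]) ?_)
    refine (norm_sum_le _ _).trans (Finset.sum_le_sum fun i hi => ?_)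
    rw [norm_smul]
    exact mul_le_mul_of_nonneg_right (hpS l i hi) (norm_nonneg _)
  have hsum : ∀ l, ∑ i, (Γ l (w i) - Δ l i (w i)) * (x i - p l i) =
      ∑ i, (Γ l (w i) - Δ l i (w i)) * x i - ∑ i ∈ S, (Γ l (w i) - Δ l i (w i)) * p l i -
        ∑ i ∈ Sᶜ, (Γ l (w i) - Δ l i (w i)) * p l i := fun l => by
    rw [sub_sub, Finset.sum_add_sum_compl S, ← Finset.sum_sub_distrib]
    simp only [mul_sub]
  simpa [hsum] using (hx.sub hS).sub (tendsto_sum_compl_sub_mul_zero hΓ hΔ w hW hkkt)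

end Vanishing

section Subsequences

variable {V : Type*} [NormedAddCommGroup V] [NormedSpace ℝ V] {U K : Set V} {g : V → ℝ}

lemma StrictConvexOn.exists_subseq_tendsto_of_midpointGap (hg : StrictConvexOn ℝ U g)
    (hU : IsOpen U) (hcont : ContinuousOn g U) (hK : IsCompact K) (hKU : K ⊆ U) {n : ℕ}
    {t : ℕ → ℕ → V} (htK : ∀ r i, i ≤ n → t r i ∈ K)
    (hgap : ∀ i < n, Tendsto (fun r => midpointGap g (t r i) (t r (i + 1))) atTop (𝓝 0)) :
    ∃ t₀ ∈ K, ∃ φ : ℕ → ℕ, StrictMono φ ∧ ∀ i ≤ n, Tendsto (fun l => t (φ l) i) atTop (𝓝 t₀) := by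
  obtain ⟨T, hT, φ, hφ, hlim⟩ := (isCompact_univ_pi fun _ : Fin (n + 1) => hK).tendsto_subseq
    (x := fun r (i : Fin (n + 1)) => t r i) fun r i _ => htK r i (Nat.lt_succ_iff.1 i.2)
  have hTi : ∀ i (hi : i ≤ n),
      Tendsto (fun l => t (φ l) i) atTop (𝓝 (T ⟨i, Nat.lt_succ_of_le hi⟩)) := fun i hi =>
    tendsto_pi_nhds.1 hlim ⟨i, Nat.lt_succ_of_le hi⟩
  have hconst : ∀ i (hi : i ≤ n), T ⟨i, Nat.lt_succ_of_le hi⟩ = T 0 := by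
    intro i
    induction i with
    | zero => exact fun _ => rfl
    | succ i ih =>
      intro hi
      rw [← ih (by omega)]
      exact (hg.eq_of_tendsto_midpointGap hU hcont (hKU (hT _ trivial)) (hKU (hT _ trivial))
        (hTi i (by omega)) (hTi (i + 1) hi) ((hgap i hi).comp hφ.tendsto_atTop)).symm
  exact ⟨T 0, hT 0 trivial, φ, hφ, fun i hi => hconst i hi ▸ hTi i hi⟩

lemma StrictConvexOn.tendsto_of_midpointGap (hg : StrictConvexOn ℝ U g) (hU : IsOpen U)
    (hcont : ContinuousOn g U) (hK : IsCompact K) (hKU : K ⊆ U) {t : ℕ → V} (htK : ∀ r, t r ∈ K)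
    {t₀ : V} (ht₀ : t₀ ∈ U) (hgap : Tendsto (fun r => midpointGap g (t r) t₀) atTop (𝓝 0)) :
    Tendsto t atTop (𝓝 t₀) := by
  refine tendsto_of_subseq_tendsto fun ns hns => ?_
  obtain ⟨a, ha, ms, hms, hlim⟩ := hK.tendsto_subseq fun l => htK (ns l)
  have := hg.eq_of_tendsto_midpointGap hU hcont (hKU ha) ht₀ hlim tendsto_const_nhds
    (hgap.comp (hns.comp hms.tendsto_atTop))
  exact ⟨ms, this ▸ hlim⟩

end Subsequences

section Cycles

variable {n : ℕ} {a : ℕ → ℕ → ℝ}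

lemma cycle_antitone (hstep : ∀ r i, i < n → a r (i + 1) ≤ a r i) (r : ℕ) {i j : ℕ}
    (hij : i ≤ j) (hj : j ≤ n) : a r j ≤ a r i := by
  induction j, hij using Nat.le_induction with
  | base => exact le_rfl
  | succ j _ ih => exact (hstep r j hj).trans (ih (by omega))

lemma antitone_cycle_start (hstep : ∀ r i, i < n → a r (i + 1) ≤ a r i)
    (hwrap : ∀ r, a (r + 1) 0 = a r n) : Antitone fun r => a r 0 :=
  antitone_nat_of_succ_le fun r => (hwrap r).trans_le (cycle_antitone hstep r n.zero_le le_rfl)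

lemma exists_tendsto_of_cycle_antitone (hstep : ∀ r i, i < n → a r (i + 1) ≤ a r i)
    (hwrap : ∀ r, a (r + 1) 0 = a r n) {c : ℝ} (hc : ∀ r, c ≤ a r 0) :
    ∃ L, ∀ i ≤ n, Tendsto (fun r => a r i) atTop (𝓝 L) := by
  have hlim := tendsto_atTop_ciInf (antitone_cycle_start hstep hwrap)
    ⟨c, by rintro _ ⟨r, rfl⟩; exact hc r⟩
  refine ⟨_, fun i hi => tendsto_of_tendsto_of_tendsto_of_le_of_le
    (hlim.comp (tendsto_add_atTop_nat 1)) hlim (fun r => ?_)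
    (fun r => cycle_antitone hstep r i.zero_le hi)⟩
  exact (hwrap r).trans_le (cycle_antitone hstep r hi le_rfl)

end Cycles

lemma apply_eq_of_update_ne {α : Type*} {n : ℕ} {y : ℕ → Fin n → α}
    (hy : ∀ k : Fin n, ∀ j, j ≠ k → y (k + 1) j = y k j) (i : Fin n) {k : ℕ}
    (hik : (i : ℕ) + 1 ≤ k) (hk : k ≤ n) : y k i = y (i + 1) i := by
  induction k, hik using Nat.le_induction with
  | base => rfl
  | succ k hik ih =>
    rw [← ih (by omega)]
    exact hy ⟨k, by omega⟩ i (fun h => by rw [Fin.ext_iff] at h; simp at h; omega)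

section CyclicCoordinateMinimization

variable {κ : Type*} {n : ℕ} {g : (κ → ℝ) → ℝ} {E : Matrix κ (Fin n) ℝ}
  {S : Finset (Fin n)} {lam : ℝ} {U : Set (κ → ℝ)} {xi : ℕ → ℕ → Fin n → ℝ}

lemma ccm_mem
    (hstep : ∀ r, ∀ i : Fin n, IsCoordMinStep g E S lam U i (xi r i) (xi r ((i : ℕ) + 1)))
    (hwrap : ∀ r, xi (r + 1) 0 = xi r n) (h0 : xi 0 0 ∈ feasibleSet S ∧ E *ᵥ xi 0 0 ∈ U) :
    ∀ r i, i ≤ n → xi r i ∈ feasibleSet S ∧ E *ᵥ xi r i ∈ U := by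
  have hsucc : ∀ r i, i < n → xi r (i + 1) ∈ feasibleSet S ∧ E *ᵥ xi r (i + 1) ∈ U :=
    fun r i hi => ⟨(hstep r ⟨i, hi⟩).1, (hstep r ⟨i, hi⟩).2.1⟩
  have hstart : ∀ r, xi r 0 ∈ feasibleSet S ∧ E *ᵥ xi r 0 ∈ U := by
    intro r
    induction r with
    | zero => exact h0
    | succ r ih =>
      rw [hwrap]
      rcases n.eq_zero_or_pos with rfl | hn
      · exact ih
      · simpa [Nat.sub_add_cancel hn] using hsucc r (n - 1) (by omega)
  rintro r (_ | i) hi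
  exacts [hstart r, hsucc r i hi]

lemma exists_tendsto_l1Obj_ccm
    (hmem : ∀ r i, i ≤ n → xi r i ∈ feasibleSet S ∧ E *ᵥ xi r i ∈ U)
    (hstep : ∀ r, ∀ i : Fin n, IsCoordMinStep g E S lam U i (xi r i) (xi r ((i : ℕ) + 1)))
    (hwrap : ∀ r, xi (r + 1) 0 = xi r n) {c : ℝ} (hc : ∀ r, c ≤ l1Obj g E S lam (xi r 0)) :
    ∃ L, (∀ i ≤ n, Tendsto (fun r => l1Obj g E S lam (xi r i)) atTop (𝓝 L)) ∧
      ∀ r i, i ≤ n → l1Obj g E S lam (xi r i) ≤ l1Obj g E S lam (xi 0 0) := by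
  set a : ℕ → ℕ → ℝ := fun r i => l1Obj g E S lam (xi r i)
  have hdec : ∀ r i, i < n → a r (i + 1) ≤ a r i := fun r i hi =>
    (hstep r ⟨i, hi⟩).l1Obj_le (hmem r i hi.le).1 (hmem r i hi.le).2
  have hwrapF : ∀ r, a (r + 1) 0 = a r n := fun r => by simp only [a, hwrap]
  obtain ⟨L, hL⟩ := exists_tendsto_of_cycle_antitone hdec hwrapF hc
  exact ⟨L, hL, fun r i hi => (cycle_antitone hdec r i.zero_le hi).trans
    (antitone_cycle_start hdec hwrapF r.zero_le)⟩

lemma le_l1Obj_of_ccm [Fintype κ] (hlam : 0 ≤ lam) (hU : IsOpen U) (hg : StrictConvexOn ℝ U g)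
    (hC1 : ContDiffOn ℝ 1 g U) {K : Set (κ → ℝ)} (hK : IsCompact K) (hKU : K ⊆ U)
    (hmem : ∀ r i, i ≤ n → xi r i ∈ feasibleSet S ∧ E *ᵥ xi r i ∈ K)
    (hstep : ∀ r, ∀ i : Fin n, IsCoordMinStep g E S lam U i (xi r i) (xi r ((i : ℕ) + 1)))
    {C : ℝ} (hbddS : ∀ r, ∀ j ∈ S, |xi r n j| ≤ C) (hbddE : ∀ r, ‖E *ᵥ xi r n‖ ≤ C)
    {L : ℝ} (hL : ∀ i ≤ n, Tendsto (fun r => l1Obj g E S lam (xi r i)) atTop (𝓝 L))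
    {xs : Fin n → ℝ} (hxs : xs ∈ feasibleSet S) (hxsU : E *ᵥ xs ∈ U) :
    L ≤ l1Obj g E S lam xs := by
  have hcont : ContinuousOn g U := hC1.continuousOn
  have hdiff : ∀ t ∈ U, DifferentiableAt ℝ g t := fun t ht =>
    (hC1.differentiableOn one_ne_zero).differentiableAt (hU.mem_nhds ht)
  have hgap : ∀ i < n, Tendsto (fun r => midpointGap g (E *ᵥ xi r i) (E *ᵥ xi r (i + 1)))
      atTop (𝓝 0) := fun i hi => by
    refine squeeze_zero (fun r => hg.convexOn.midpointGap_nonneg (hKU (hmem r i hi.le).2)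
      (hKU (hmem r (i + 1) hi).2)) (fun r => (hstep r ⟨i, hi⟩).midpointGap_le hlam hg.1
        (hmem r i hi.le).1 (hKU (hmem r i hi.le).2)) ?_
    simpa using ((hL i hi.le).sub (hL (i + 1) hi)).div_const 2
  obtain ⟨tb, htb, φ, hφ, hlim⟩ := hg.exists_subseq_tendsto_of_midpointGap hU hcont hK hKU
    (fun r i hi => (hmem r i hi).2) hgap
  have hD : ∀ i ≤ n, Tendsto (fun l => fderiv ℝ g (E *ᵥ xi (φ l) i)) atTop
      (𝓝 (fderiv ℝ g tb)) := fun i hi =>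
    ((hC1.continuousOn_fderiv_of_isOpen hU le_rfl).continuousAt
      (hU.mem_nhds (hKU htb))).tendsto.comp (hlim i hi)
  -- coordinate `i` is not touched after step `i + 1` of a sweep
  have hkkt : ∀ r, ∀ i : Fin n,
      CoordKKT S lam i (fderiv ℝ g (E *ᵥ xi r ((i : ℕ) + 1)) (E.col i)) (xi r n i) := by
    intro r i
    rw [apply_eq_of_update_ne (fun k j hj => (hstep r k).2.2.1 j hj) i i.2 le_rfl]
    exact (hstep r i).coordKKT hlam hU (hdiff _ (hstep r i).2.1)
  have herr := tendsto_sum_sub_mul_sub_zero (hD n le_rfl)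
    (Δ := fun l (i : Fin n) => fderiv ℝ g (E *ᵥ xi (φ l) ((i : ℕ) + 1)))
    (fun i => hD (i + 1) i.2) E.col (p := fun l => xi (φ l) n) (fun l => hbddS (φ l))
    (fun l => by rw [← mulVec_eq_sum_smul_col]; exact hbddE (φ l))
    (fun l i hi => (hkkt (φ l) i).2 hi) xs
  refine le_of_tendsto' (by simpa using ((hL n le_rfl).comp hφ.tendsto_atTop).add herr)
    fun l => l1Obj_add_sum_le hg.convexOn (hKU (hmem (φ l) n le_rfl).2)
      (hdiff _ (hKU (hmem (φ l) n le_rfl).2)) hxs hxsU (hkkt (φ l))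

theorem tendsto_mulVec_ccm [Fintype κ] (hlam : 0 < lam) (hU : IsOpen U)
    (hg : StrictConvexOn ℝ U g) (hC1 : ContDiffOn ℝ 1 g U)
    (hsub : ∀ M, IsClosed {t | t ∈ U ∧ g t ≤ M})
    {xs : Fin n → ℝ} (hxs : xs ∈ feasibleSet S) (hxsU : E *ᵥ xs ∈ U)
    (hmin : ∀ y ∈ feasibleSet S, E *ᵥ y ∈ U → l1Obj g E S lam xs ≤ l1Obj g E S lam y)
    (huniq : ∀ y ∈ feasibleSet S, E *ᵥ y ∈ U → l1Obj g E S lam y = l1Obj g E S lam xs →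
      E *ᵥ y = E *ᵥ xs)
    (h0 : xi 0 0 ∈ feasibleSet S ∧ E *ᵥ xi 0 0 ∈ U)
    (hstep : ∀ r, ∀ i : Fin n, IsCoordMinStep g E S lam U i (xi r i) (xi r ((i : ℕ) + 1)))
    (hwrap : ∀ r, xi (r + 1) 0 = xi r n) :
    ∀ i ≤ n, Tendsto (fun r => E *ᵥ xi r i) atTop (𝓝 (E *ᵥ xs)) := by
  have hmem := ccm_mem hstep hwrap h0
  set F := l1Obj g E S lam
  obtain ⟨L, hL, hle⟩ := exists_tendsto_l1Obj_ccm hmem hstep hwrap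
    fun r => hmin _ (hmem r 0 n.zero_le).1 (hmem r 0 n.zero_le).2
  obtain ⟨C, hC⟩ := (Metric.isBounded_iff_subset_closedBall 0).1 (isBounded_l1RedSublevel hlam
    hg.convexOn hC1.continuousOn hsub hxs hxsU hmin huniq (F (xi 0 0)))
  have hdata : ∀ r i, i ≤ n → ‖l1Data E S (xi r i)‖ ≤ C := fun r i hi =>
    mem_closedBall_zero_iff.1 (hC (l1Data_mem_l1RedSublevel (hmem r i hi).1 (hmem r i hi).2
      (hle r i hi)))
  set K := {t | t ∈ U ∧ g t ≤ F (xi 0 0)} ∩ Metric.closedBall 0 C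
  have hK : IsCompact K := (isCompact_closedBall 0 C).inter_left (hsub _)
  have hmemK : ∀ r i, i ≤ n → xi r i ∈ feasibleSet S ∧ E *ᵥ xi r i ∈ K := fun r i hi =>
    ⟨(hmem r i hi).1, ⟨(hmem r i hi).2, (g_le_l1Obj hlam.le _).trans (hle r i hi)⟩,
      mem_closedBall_zero_iff.2 ((norm_fst_le _).trans (hdata r i hi))⟩
  have hL_eq : L = F xs := le_antisymm
    (le_l1Obj_of_ccm hlam.le hU hg hC1 hK (fun t ht => ht.1.1) hmemK hstep
      (fun r j hj => ((norm_le_pi_norm (l1Data E S (xi r n)).2 ⟨j, hj⟩).trans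
        (norm_snd_le _)).trans (hdata r n le_rfl))
      (fun r => (norm_fst_le _).trans (hdata r n le_rfl)) hL hxs hxsU)
    (ge_of_tendsto' (hL 0 n.zero_le) fun r =>
      hmin _ (hmem r 0 n.zero_le).1 (hmem r 0 n.zero_le).2)
  intro i hi
  have hgap : ∀ r, midpointGap g (E *ᵥ xi r i) (E *ᵥ xs) ≤ (F (xi r i) - F xs) / 2 := fun r =>
    midpointGap_le_of_le_midpoint (S := S) hlam.le (hmin _
      (convex_feasibleSet.midpoint_mem (hmem r i hi).1 hxs)
      (by rw [mulVec_midpoint]; exact hg.1.midpoint_mem (hmem r i hi).2 hxsU))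
  refine hg.tendsto_of_midpointGap hU hC1.continuousOn hK (fun t ht => ht.1.1)
    (fun r => (hmemK r i hi).2) hxsU (squeeze_zero (fun r => hg.convexOn.midpointGap_nonneg
      (hmem r i hi).2 hxsU) hgap ?_)
  simpa [hL_eq] using ((hL i hi).sub_const (F xs)).div_const 2

end CyclicCoordinateMinimization

lemma continuous_euclNorm {k : ℕ} : Continuous (euclNorm (k := k)) := by
  unfold euclNorm
  fun_prop

theorem ccm_f1_t_converges_general
(m n : ℕ)
    (S : Finset (Fin n)) (lam : ℝ) (hlam : 0 < lam)
    (E : Matrix (Fin m) (Fin n) ℝ)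
    (Dg : Set (Fin m → ℝ)) (gr : (Fin m → ℝ) → ℝ)
    (hDg : Convex ℝ Dg) (hgconv : ConvexOn ℝ Dg gr)
    (hCg : (interior Dg).Nonempty)
    (hgs : StrictConvexOn ℝ (interior Dg) gr)
    (hgC2 : ContDiffOn ℝ 2 gr (interior Dg))
    (hA3 : (∀ t₀ ∈ frontier (interior Dg),
              Filter.Tendsto gr (nhdsWithin t₀ (interior Dg)) Filter.atTop)
           ∨ (S = Finset.univ ∧ (∀ t, 0 ≤ gr t) ∧ Dg = Set.univ))
    (X : Set (Fin n → ℝ)) (hX : X = {x | ∀ i ∉ S, 0 ≤ x i})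
    (F : (Fin n → ℝ) → ℝ)
    (hF : ∀ x, F x = gr (E.mulVec x) + lam * ∑ i ∈ S, |x i|)
    (XStar : Set (Fin n → ℝ))
    (hXStar : XStar = {x | x ∈ X ∧ E.mulVec x ∈ Dg ∧
                ∀ y ∈ X, E.mulVec y ∈ Dg → F x ≤ F y})
    (hXStarNe : XStar.Nonempty)
(tstar : Fin m → ℝ) (htstar : ∀ xs ∈ XStar, E.mulVec xs = tstar)
(x : ℕ → Fin n → ℝ) (xi : ℕ → ℕ → Fin n → ℝ)
    (hx0 : x 0 ∈ X) (hx0fin : E.mulVec (x 0) ∈ Dg)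
    (hxi0 : ∀ r, xi r 0 = x r)
    (hstep : ∀ r, ∀ i : Fin n,
        xi r ((i : ℕ) + 1) ∈ X ∧ E.mulVec (xi r ((i : ℕ) + 1)) ∈ Dg ∧
        (∀ j, j ≠ i → xi r ((i : ℕ) + 1) j = xi r (i : ℕ) j) ∧
        (∀ y ∈ X, (∀ j, j ≠ i → y j = xi r (i : ℕ) j) →
            E.mulVec y ∈ Dg → F (xi r ((i : ℕ) + 1)) ≤ F y))
    (hxsucc : ∀ r, x (r + 1) = xi r n) :
    ∀ i : ℕ, i ≤ n →
      Filter.Tendsto (fun r => euclNorm (E.mulVec (xi r i) - tstar)) Filter.atTop (nhds 0) := by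
  subst hX hXStar
  obtain rfl : F = l1Obj gr E S lam := funext hF
  obtain ⟨xs, hxs, hxsU, hxsmin⟩ := hXStarNe
  have hts : E *ᵥ xs = tstar := htstar xs ⟨hxs, hxsU, hxsmin⟩
  have hbl : ∀ t ∈ frontier (interior Dg), Tendsto gr (𝓝[interior Dg] t) atTop :=
    hA3.elim id fun h => by simp [h.2.2]
  have hint : interior Dg = Dg :=
    interior_subset.antisymm (hDg.subset_interior_of_tendsto_atTop_frontier hCg hgconv hbl)
  rw [hint] at hgs hgC2 hbl
  have hU : IsOpen Dg := hint ▸ isOpen_interior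
  have hlim := tendsto_mulVec_ccm hlam hU hgs (hgC2.of_le one_le_two)
    (hgC2.continuousOn.isClosed_sublevel_of_tendsto_atTop_frontier hU hbl) hxs hxsU hxsmin
    (fun y hy hyU hFy => hts ▸ htstar y ⟨hy, hyU, fun z hz hzU => hFy ▸ hxsmin z hz hzU⟩)
    (hxi0 0 ▸ ⟨hx0, hx0fin⟩) hstep fun r => (hxi0 _).trans (hxsucc r)
  intro i hi
  have h := (continuous_euclNorm.tendsto _).comp ((hlim i hi).sub_const tstar)
  rwa [hts, sub_self, show euclNorm (0 : Fin m → ℝ) = 0 by simp [euclNorm]] at h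

/-- `t^{r,i} = E x^{r,i}` converges to `t*` for every `0 ≤ i ≤ n`. -/
theorem ccm_f1_t_converges
(m n : ℕ) (hm : 0 < m) (hn : 0 < n)
    (S : Finset (Fin n)) (lam : ℝ) (hlam : 0 < lam)
    (E : Matrix (Fin m) (Fin n) ℝ) (hE : ∀ j, ∃ i, E i j ≠ 0)
    (Dg : Set (Fin m → ℝ)) (gr : (Fin m → ℝ) → ℝ)
    (hDg : Convex ℝ Dg) (hgconv : ConvexOn ℝ Dg gr)
    (hCg : (interior Dg).Nonempty)
    (hgs : StrictConvexOn ℝ (interior Dg) gr)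
    (hgC2 : ContDiffOn ℝ 2 gr (interior Dg))
    (hhess : ∀ t ∈ interior Dg, ∀ v : Fin m → ℝ, v ≠ 0 → 0 < hessQF gr t v)
    (hA3 : (∀ t₀ ∈ frontier (interior Dg),
              Filter.Tendsto gr (nhdsWithin t₀ (interior Dg)) Filter.atTop)
           ∨ (S = Finset.univ ∧ (∀ t, 0 ≤ gr t) ∧ Dg = Set.univ))
    (X : Set (Fin n → ℝ)) (hX : X = {x | ∀ i ∉ S, 0 ≤ x i})
    (F : (Fin n → ℝ) → ℝ)
    (hF : ∀ x, F x = gr (E.mulVec x) + lam * ∑ i ∈ S, |x i|)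
    (XStar : Set (Fin n → ℝ))
    (hXStar : XStar = {x | x ∈ X ∧ E.mulVec x ∈ Dg ∧
                ∀ y ∈ X, E.mulVec y ∈ Dg → F x ≤ F y})
    (hXStarNe : XStar.Nonempty)
(tstar : Fin m → ℝ) (htstar : ∀ xs ∈ XStar, E.mulVec xs = tstar)
(x : ℕ → Fin n → ℝ) (xi : ℕ → ℕ → Fin n → ℝ)
    (hx0 : x 0 ∈ X) (hx0fin : E.mulVec (x 0) ∈ Dg)
    (hxi0 : ∀ r, xi r 0 = x r)
    (hstep : ∀ r, ∀ i : Fin n,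
        xi r ((i : ℕ) + 1) ∈ X ∧ E.mulVec (xi r ((i : ℕ) + 1)) ∈ Dg ∧
        (∀ j, j ≠ i → xi r ((i : ℕ) + 1) j = xi r (i : ℕ) j) ∧
        (∀ y ∈ X, (∀ j, j ≠ i → y j = xi r (i : ℕ) j) →
            E.mulVec y ∈ Dg → F (xi r ((i : ℕ) + 1)) ≤ F y))
    (hxsucc : ∀ r, x (r + 1) = xi r n) :
    ∀ i : ℕ, i ≤ n →
      Filter.Tendsto (fun r => euclNorm (E.mulVec (xi r i) - tstar)) Filter.atTop (nhds 0) :=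
  ccm_f1_t_converges_general m n S lam hlam E Dg gr hDg hgconv hCg hgs hgC2 hA3 X hX F hF XStar
    hXStar hXStarNe tstar htstar x xi hx0 hx0fin hxi0 hstep hxsucc
end

section
/- The differences between successive CCM iterates for f₂ are square-summable: Σ_{r=0}^∞ ‖z^r − z^{r+1}‖² < ∞, where ‖·‖ is the Euclidean norm on ℝ^n. -/
/-!
On every coordinate line `f₂` is strongly convex with modulus `∑ₖ E k i ^ 2 > 0`: the quadratic
part contributes exactly that, and `-log` and `|·|` are convex. Comparing a coordinate minimizer
`b` of `f₂` through `a` with the midpoint of `a` and `b` gives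
`f₂ b + (∑ₖ E k i ^ 2) / 2 * (a i - b i) ^ 2 ≤ f₂ a`, so one sweep decreases `f₂` by a weighted
square of `z r - z (r + 1)`. By (A5)* the coordinates outside `S` stay bounded on the sublevel set
of `z 0`, hence `f₂` is bounded below along the iterates and the decreases are summable.
-/

open Filter Topology Matrix

noncomputable def euclidNorm {k : ℕ} (v : Fin k → ℝ) : ℝ := Real.sqrt (∑ i, v i ^ 2)

open Finset

lemma euclidNorm_sq {k : ℕ} (v : Fin k → ℝ) : euclidNorm v ^ 2 = ∑ i, v i ^ 2 :=
  Real.sq_sqrt (sum_nonneg fun _ _ => sq_nonneg _)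

lemma summable_sub_succ_of_antitone {u : ℕ → ℝ} (hu : Antitone u) {L : ℝ} (hL : ∀ r, L ≤ u r) :
    Summable fun r => u r - u (r + 1) :=
  summable_of_sum_range_le (c := u 0 - L) (fun r => sub_nonneg.2 (hu r.le_succ)) fun N => by
    rw [sum_range_sub']
    linarith [hL N]

section Sweep

variable {α : Type*} {n : ℕ} (y : ℕ → Fin n → α)

lemma forall_le_of_zero_of_succ {P : (Fin n → α) → Prop} (h0 : P (y 0))
    (hs : ∀ i : Fin n, P (y (i + 1))) {k : ℕ} (hk : k ≤ n) : P (y k) := by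
  cases k with
  | zero => exact h0
  | succ p => exact hs ⟨p, hk⟩

variable {y}

lemma sweep_apply_eq (hy : ∀ i : Fin n, ∀ j, j ≠ i → y (i + 1) j = y i j) (j : Fin n) {l k : ℕ}
    (hlk : l ≤ k) (hkn : k ≤ n) (hj : ∀ p, l ≤ p → p < k → p ≠ j) : y k j = y l j := by
  induction k, hlk using Nat.le_induction with
  | base => rfl
  | succ k hlk ih =>
    have hk : k < n := hkn
    rw [← ih hk.le fun p hlp hpk => hj p hlp (hpk.trans k.lt_succ_self)]
    exact hy ⟨k, hk⟩ j fun h => hj k hlk k.lt_succ_self (congrArg Fin.val h.symm)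

lemma sweep_apply_self (hy : ∀ i : Fin n, ∀ j, j ≠ i → y (i + 1) j = y i j) (i : Fin n) :
    y 0 i = y i i :=
  (sweep_apply_eq hy i (Nat.zero_le _) i.isLt.le fun _ _ hp => hp.ne).symm

lemma sweep_last_apply_self (hy : ∀ i : Fin n, ∀ j, j ≠ i → y (i + 1) j = y i j) (i : Fin n) :
    y n i = y (i + 1) i :=
  sweep_apply_eq hy i i.isLt le_rfl fun _ hp _ => (Nat.lt_of_succ_le hp).ne'

end Sweep

lemma sum_le_sub_of_forall_add_le {n : ℕ} {G : ℕ → ℝ} {d : Fin n → ℝ}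
    (h : ∀ i : Fin n, G (i + 1) + d i ≤ G i) : ∑ i, d i ≤ G 0 - G n := by
  rw [← sum_range_sub', ← Fin.sum_univ_eq_sum_range (fun k => G k - G (k + 1))]
  exact sum_le_sum fun i _ => by linarith [h i]

section Objective

variable {m n : ℕ} (S : Finset (Fin n)) (lam : ℝ) (E : Matrix (Fin m) (Fin n) ℝ)

-- Where some `x i ≤ 0` with `i ∉ S`, this takes `Real.log`'s junk values instead of `+∞`.
noncomputable def f₂ (x : Fin n → ℝ) : ℝ :=
  (∑ k, (E *ᵥ x) k ^ 2) - ∑ i ∈ Sᶜ, Real.log (x i) + lam * ∑ i ∈ S, |x i|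

variable {S lam E}

lemma f₂_midpoint_le (hlam : 0 ≤ lam) {a b : Fin n → ℝ}
    (ha : ∀ i ∉ S, 0 < a i) (hb : ∀ i ∉ S, 0 < b i) :
    f₂ S lam E (fun i => (a i + b i) / 2)
      ≤ (f₂ S lam E a + f₂ S lam E b) / 2 - (∑ k, (E *ᵥ (a - b)) k ^ 2) / 4 := by
  have hquad : ∑ k, (E *ᵥ fun i => (a i + b i) / 2) k ^ 2
      = ((∑ k, (E *ᵥ a) k ^ 2) + ∑ k, (E *ᵥ b) k ^ 2) / 2 - (∑ k, (E *ᵥ (a - b)) k ^ 2) / 4 := by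
    have hmid : (fun i => (a i + b i) / 2) = (1 / 2 : ℝ) • (a + b) := by
      ext i; simp only [Pi.smul_apply, Pi.add_apply, smul_eq_mul]; ring
    rw [← sum_add_distrib, sum_div, sum_div, ← sum_sub_distrib]
    refine sum_congr rfl fun k _ => ?_
    simp only [hmid, mulVec_smul, mulVec_add, mulVec_sub, Pi.smul_apply, Pi.add_apply,
      Pi.sub_apply, smul_eq_mul]
    ring
  have hlog : ∑ i ∈ Sᶜ, (Real.log (a i) + Real.log (b i)) / 2
      ≤ ∑ i ∈ Sᶜ, Real.log ((a i + b i) / 2) := by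
    refine sum_le_sum fun i hi => ?_
    have hi := mem_compl.mp hi
    have := strictConcaveOn_log_Ioi.concaveOn.2 (ha i hi) (hb i hi)
      (by norm_num : (0 : ℝ) ≤ 1 / 2) (by norm_num : (0 : ℝ) ≤ 1 / 2) (by norm_num)
    simp only [smul_eq_mul] at this
    convert this using 2 <;> ring
  have habs : ∑ i ∈ S, |(a i + b i) / 2| ≤ (∑ i ∈ S, |a i| + ∑ i ∈ S, |b i|) / 2 := by
    rw [← sum_add_distrib, sum_div]
    refine sum_le_sum fun i _ => ?_
    rw [abs_div, abs_two]
    exact div_le_div_of_nonneg_right (abs_add_le _ _) zero_le_two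
  rw [← sum_div, sum_add_distrib] at hlog
  unfold f₂
  rw [hquad]
  nlinarith [mul_le_mul_of_nonneg_left habs hlam]

lemma sum_mulVec_sub_sq_of_eq_of_ne {a b : Fin n → ℝ} {i : Fin n} (hab : ∀ j, j ≠ i → b j = a j) :
    ∑ k, (E *ᵥ (a - b)) k ^ 2 = (a i - b i) ^ 2 * ∑ k, E k i ^ 2 := by
  have hsingle : a - b = Pi.single i (a i - b i) := by
    ext j
    rcases eq_or_ne j i with rfl | hj
    · simp
    · simp [hab j hj, hj]
  rw [hsingle, mulVec_single, mul_sum]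
  exact sum_congr rfl fun k _ => by simp [mul_pow, mul_comm]

lemma f₂_add_le_of_coord_min (hlam : 0 ≤ lam) {a b : Fin n → ℝ} {i : Fin n}
    (ha : ∀ j ∉ S, 0 < a j) (hb : ∀ j ∉ S, 0 < b j) (hab : ∀ j, j ≠ i → b j = a j)
    (hmin : ∀ y, (∀ j, j ≠ i → y j = a j) → (∀ j ∉ S, 0 < y j) → f₂ S lam E b ≤ f₂ S lam E y) :
    f₂ S lam E b + (∑ k, E k i ^ 2) / 2 * (a i - b i) ^ 2 ≤ f₂ S lam E a := by
  have hmid := f₂_midpoint_le (E := E) hlam ha hb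
  rw [sum_mulVec_sub_sq_of_eq_of_ne hab] at hmid
  have hb_le := hmin (fun j => (a j + b j) / 2) (fun j hj => by simp only [hab j hj]; ring)
    (fun j hj => by have := ha j hj; have := hb j hj; positivity)
  linarith

lemma f₂_ge_neg_card_mul_log (hlam : 0 ≤ lam) {x : Fin n → ℝ} {ξ : ℝ}
    (hx : ∀ i ∉ S, 0 < x i ∧ x i ≤ ξ) :
    -((Sᶜ.card : ℝ) * Real.log ξ) ≤ f₂ S lam E x := by
  have hlog : ∑ i ∈ Sᶜ, Real.log (x i) ≤ Sᶜ.card * Real.log ξ := by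
    rw [← nsmul_eq_mul, ← sum_const]
    exact sum_le_sum fun i hi =>
      Real.log_le_log (hx i (mem_compl.mp hi)).1 (hx i (mem_compl.mp hi)).2
  have hquad : 0 ≤ ∑ k, (E *ᵥ x) k ^ 2 := sum_nonneg fun k _ => sq_nonneg _
  have hl1 : 0 ≤ lam * ∑ i ∈ S, |x i| := mul_nonneg hlam (sum_nonneg fun i _ => abs_nonneg _)
  unfold f₂
  linarith

lemma f₂_sweep_le (hlam : 0 ≤ lam) {y : ℕ → Fin n → ℝ} (h0 : ∀ j ∉ S, 0 < y 0 j)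
    (hy : ∀ i : Fin n, (∀ j ∉ S, 0 < y (i + 1) j) ∧ (∀ j, j ≠ i → y (i + 1) j = y i j) ∧
      ∀ v, (∀ j, j ≠ i → v j = y i j) → (∀ j ∉ S, 0 < v j) →
        f₂ S lam E (y (i + 1)) ≤ f₂ S lam E v) :
    f₂ S lam E (y n) + ∑ i, (∑ k, E k i ^ 2) / 2 * (y 0 i - y n i) ^ 2 ≤ f₂ S lam E (y 0) := by
  have hagree := fun i => (hy i).2.1
  have hpos (i : Fin n) : ∀ j ∉ S, 0 < y i j :=
    forall_le_of_zero_of_succ y (P := fun x => ∀ j ∉ S, 0 < x j) h0 (fun i => (hy i).1) i.isLt.le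
  have hdesc (i : Fin n) : f₂ S lam E (y (i + 1)) + (∑ k, E k i ^ 2) / 2 * (y i i - y (i + 1) i) ^ 2
      ≤ f₂ S lam E (y i) :=
    f₂_add_le_of_coord_min hlam (hpos i) (hy i).1 (hagree i) (hy i).2.2
  have := sum_le_sub_of_forall_add_le (G := fun k => f₂ S lam E (y k)) hdesc
  simp only [sweep_apply_self hagree, sweep_last_apply_self hagree]
  linarith

lemma f₂_ccm_iterate_le (hlam : 0 ≤ lam) {z : ℕ → Fin n → ℝ} {zi : ℕ → ℕ → Fin n → ℝ}
    (h0 : ∀ j ∉ S, 0 < z 0 j) (hzi0 : ∀ r, zi r 0 = z r)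
    (hstep : ∀ r, ∀ i : Fin n, (∀ j ∉ S, 0 < zi r (i + 1) j) ∧
      (∀ j, j ≠ i → zi r (i + 1) j = zi r i j) ∧
      ∀ v, (∀ j, j ≠ i → v j = zi r i j) → (∀ j ∉ S, 0 < v j) →
        f₂ S lam E (zi r (i + 1)) ≤ f₂ S lam E v)
    (hzsucc : ∀ r, z (r + 1) = zi r n) (r : ℕ) :
    (∀ j ∉ S, 0 < z r j) ∧
      f₂ S lam E (z (r + 1)) + ∑ i, (∑ k, E k i ^ 2) / 2 * (z r i - z (r + 1) i) ^ 2
        ≤ f₂ S lam E (z r) := by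
  have hpos : ∀ r, ∀ j ∉ S, 0 < z r j := by
    intro r
    induction r with
    | zero => exact h0
    | succ r ih =>
      rw [hzsucc r]
      exact forall_le_of_zero_of_succ (zi r) (P := fun x => ∀ j ∉ S, 0 < x j)
        ((hzi0 r).symm ▸ ih) (fun i => (hstep r i).1) le_rfl
  refine ⟨hpos r, ?_⟩
  rw [hzsucc r, ← hzi0 r]
  exact f₂_sweep_le hlam ((hzi0 r).symm ▸ hpos r) (hstep r)

end Objective

theorem ccm_f2_square_summable_general
(m n : ℕ)
    (S : Finset (Fin n)) (lam : ℝ) (hlam : 0 < lam)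
    (E : Matrix (Fin m) (Fin n) ℝ) (hE : ∀ j, ∃ i, E i j ≠ 0)
    (X : Set (Fin n → ℝ)) (hX : X = {x | ∀ i ∉ S, 0 ≤ x i})
    (F : (Fin n → ℝ) → ℝ)
    (hF : ∀ x, F x = (∑ i, (E.mulVec x i) ^ 2) - (∑ i ∈ Sᶜ, Real.log (x i))
            + lam * ∑ i ∈ S, |x i|)
    (hA5 : ∀ ξ : ℝ, ∃ ξs > (0 : ℝ), ∀ x ∈ X, (∀ i ∉ S, 0 < x i) → F x ≤ ξ →
            (∀ i ∉ S, 1 / ξs ≤ x i ∧ x i ≤ ξs) ∧ (∀ i ∈ S, |x i| ≤ ξs))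
    (z : ℕ → Fin n → ℝ) (zi : ℕ → ℕ → Fin n → ℝ)
    (hz0fin : ∀ i ∉ S, 0 < z 0 i)
    (hzi0 : ∀ r, zi r 0 = z r)
    (hstep : ∀ r, ∀ i : Fin n,
        zi r ((i : ℕ) + 1) ∈ X ∧ (∀ j ∉ S, 0 < zi r ((i : ℕ) + 1) j) ∧
        (∀ j, j ≠ i → zi r ((i : ℕ) + 1) j = zi r (i : ℕ) j) ∧
        (∀ y ∈ X, (∀ j, j ≠ i → y j = zi r (i : ℕ) j) →
            (∀ j ∉ S, 0 < y j) → F (zi r ((i : ℕ) + 1)) ≤ F y))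
    (hzsucc : ∀ r, z (r + 1) = zi r n) :
    Summable (fun r => euclidNorm (z r - z (r + 1)) ^ 2) := by
  obtain rfl : F = f₂ S lam E := funext hF
  subst hX
  have hiter := f₂_ccm_iterate_le hlam.le hz0fin hzi0 (fun r i =>
    let ⟨_, hpos, hagree, hmin⟩ := hstep r i
    ⟨hpos, hagree, fun v hv hvpos => hmin v (fun j hj => (hvpos j hj).le) hv hvpos⟩) hzsucc
  have hweight (i : Fin n) : 0 < (∑ k, E k i ^ 2) / 2 := by
    obtain ⟨k, hk⟩ := hE i
    exact half_pos (sum_pos' (fun k _ => sq_nonneg _) ⟨k, mem_univ k, by positivity⟩)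
  have hanti : Antitone fun r => f₂ S lam E (z r) := antitone_nat_of_succ_le fun r =>
    le_of_add_le_of_nonneg_left (hiter r).2 (sum_nonneg fun i _ => by positivity)
  obtain ⟨ξ, -, hξ⟩ := hA5 (f₂ S lam E (z 0))
  have hbdd (r : ℕ) : -((Sᶜ.card : ℝ) * Real.log ξ) ≤ f₂ S lam E (z r) :=
    f₂_ge_neg_card_mul_log hlam.le fun i hi => ⟨(hiter r).1 i hi,
      ((hξ (z r) (fun j hj => ((hiter r).1 j hj).le) (hiter r).1 (hanti (Nat.zero_le r))).1 i hi).2⟩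
  have hcoord (i : Fin n) : Summable fun r => (z r i - z (r + 1) i) ^ 2 := by
    have hterm (r : ℕ) : (∑ k, E k i ^ 2) / 2 * (z r i - z (r + 1) i) ^ 2
        ≤ f₂ S lam E (z r) - f₂ S lam E (z (r + 1)) := by
      have := single_le_sum (f := fun i => (∑ k, E k i ^ 2) / 2 * (z r i - z (r + 1) i) ^ 2)
        (fun i _ => by positivity) (mem_univ i)
      linarith [(hiter r).2]
    exact (summable_mul_left_iff (hweight i).ne').1 <|
      (summable_sub_succ_of_antitone hanti hbdd).of_nonneg_of_le (fun _ => by positivity) hterm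
  simp only [euclidNorm_sq, Pi.sub_apply]
  exact summable_sum fun i _ => hcoord i

/-- The successive differences of the CCM iterates for `f₂` are square-summable. -/
theorem ccm_f2_square_summable
(m n : ℕ) (hm : 0 < m) (hn : 0 < n)
    (S : Finset (Fin n)) (lam : ℝ) (hlam : 0 < lam)
    (E : Matrix (Fin m) (Fin n) ℝ) (hE : ∀ j, ∃ i, E i j ≠ 0)
    (X : Set (Fin n → ℝ)) (hX : X = {x | ∀ i ∉ S, 0 ≤ x i})
    (F : (Fin n → ℝ) → ℝ)
    (hF : ∀ x, F x = (∑ i, (E.mulVec x i) ^ 2) - (∑ i ∈ Sᶜ, Real.log (x i))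
            + lam * ∑ i ∈ S, |x i|)
    (hA5 : ∀ ξ : ℝ, ∃ ξs > (0 : ℝ), ∀ x ∈ X, (∀ i ∉ S, 0 < x i) → F x ≤ ξ →
            (∀ i ∉ S, 1 / ξs ≤ x i ∧ x i ≤ ξs) ∧ (∀ i ∈ S, |x i| ≤ ξs))
    (XStar : Set (Fin n → ℝ))
    (hXStar : XStar = {x | x ∈ X ∧ (∀ i ∉ S, 0 < x i) ∧
                ∀ y ∈ X, (∀ i ∉ S, 0 < y i) → F x ≤ F y})
    (z : ℕ → Fin n → ℝ) (zi : ℕ → ℕ → Fin n → ℝ)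
    (hz0 : z 0 ∈ X) (hz0fin : ∀ i ∉ S, 0 < z 0 i)
    (hzi0 : ∀ r, zi r 0 = z r)
    (hstep : ∀ r, ∀ i : Fin n,
        zi r ((i : ℕ) + 1) ∈ X ∧ (∀ j ∉ S, 0 < zi r ((i : ℕ) + 1) j) ∧
        (∀ j, j ≠ i → zi r ((i : ℕ) + 1) j = zi r (i : ℕ) j) ∧
        (∀ y ∈ X, (∀ j, j ≠ i → y j = zi r (i : ℕ) j) →
            (∀ j ∉ S, 0 < y j) → F (zi r ((i : ℕ) + 1)) ≤ F y))
    (hzsucc : ∀ r, z (r + 1) = zi r n) :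
    Summable (fun r => euclidNorm (z r - z (r + 1)) ^ 2) :=
  ccm_f2_square_summable_general m n S lam hlam E hE X hX F hF hA5 z zi hz0fin hzi0 hstep hzsucc
end

section
/- Let k ≥ 1, let A be a k×k real positive semidefinite matrix with A_{kk} > 0, and let λ > 0. Define h(x) = −log x_k + xᵀAx + λ Σ_{j=1}^{k−1} |x_j| for x ∈ ℝ^{k−1} × (0, ∞). Then there exist constants a₁ > 0 and a₂ > 0, depending only on λ and A, such that h(x) ≥ a₁ x_k − a₂ for every x ∈ ℝ^{k−1} × (0, ∞). -/
open Matrix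

/-!
Write `r = (A x)_k` and `c = A_kk`. Positive semidefiniteness gives the Cauchy–Schwarz bound
`r² ≤ c · xᵀAx`, hence `xᵀAx ≥ 2αr − α²c` for every `α`. The error `r − c x_k` is at most
`M Σ_{j<k} |x_j|`, with `M` the absolute row sum of `A`, so for `2αM = λ` the `ℓ¹` term absorbs it:
`xᵀAx + λ Σ_{j<k} |x_j| ≥ 2αc x_k − α²c`. Finally `−log t ≥ 1 + log β − βt` with `β = αc`
leaves a lower bound of slope `αc`.
-/

theorem Finset.abs_sum_mul_le {ι : Type*} {s : Finset ι} {a x : ι → ℝ} {M : ℝ}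
    (ha : ∀ j ∈ s, |a j| ≤ M) : |∑ j ∈ s, a j * x j| ≤ M * ∑ j ∈ s, |x j| := by
  rw [Finset.mul_sum]
  refine (Finset.abs_sum_le_sum_abs _ _).trans (Finset.sum_le_sum fun j hj => ?_)
  rw [abs_mul]
  exact mul_le_mul_of_nonneg_right (ha j hj) (abs_nonneg _)

theorem Real.log_add_one_sub_mul_le_neg_log {β t : ℝ} (hβ : 0 < β) (ht : 0 < t) :
    Real.log β + 1 - β * t ≤ -Real.log t := by
  have := Real.log_le_sub_one_of_pos (mul_pos hβ ht)
  rw [Real.log_mul hβ.ne' ht.ne'] at this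
  linarith

namespace Matrix

variable {n : Type*} [Fintype n] [DecidableEq n] {A : Matrix n n ℝ}

theorem mulVec_apply_eq_diag_add_sum_erase (A : Matrix n n ℝ) (x : n → ℝ) (i : n) :
    (A *ᵥ x) i = A i i * x i + ∑ j ∈ Finset.univ.erase i, A i j * x j :=
  (Finset.add_sum_erase _ _ (Finset.mem_univ i)).symm

theorem IsSymm.dotProduct_mulVec_add_smul_single (hA : A.IsSymm) (x : n → ℝ) (i : n) (s : ℝ) :
    (x + s • Pi.single i 1) ⬝ᵥ A *ᵥ (x + s • Pi.single i 1)
      = A i i * (s * s) + 2 * (A *ᵥ x) i * s + x ⬝ᵥ A *ᵥ x := by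
  have hcol : x ⬝ᵥ A.col i = (A *ᵥ x) i := by
    rw [← mulVec_single_one, dotProduct_mulVec, ← mulVec_transpose, hA.eq, dotProduct_single_one]
  simp only [mulVec_add, mulVec_smul, add_dotProduct, dotProduct_add, smul_dotProduct,
    dotProduct_smul, single_one_dotProduct, hcol, mulVec_single_one, col_apply, smul_eq_mul]
  ring

theorem PosSemidef.mulVec_apply_sq_le (hA : A.PosSemidef) (x : n → ℝ) (i : n) :
    (A *ᵥ x) i ^ 2 ≤ A i i * (x ⬝ᵥ A *ᵥ x) := by
  have hsymm : A.IsSymm := isHermitian_iff_isSymm.mp hA.1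
  have hdisc : discrim (A i i) (2 * (A *ᵥ x) i) (x ⬝ᵥ A *ᵥ x) ≤ 0 :=
    discrim_le_zero fun s => by
      rw [← hsymm.dotProduct_mulVec_add_smul_single, ← star_trivial (x + _)]
      exact hA.dotProduct_mulVec_nonneg _
  rw [discrim] at hdisc
  linarith

theorem PosSemidef.two_mul_diag_mul_sub_le (hA : A.PosSemidef) {i : n} (hAii : 0 < A i i)
    {α M lam : ℝ} (hα : 0 ≤ α) (hM : ∀ j, |A i j| ≤ M) (hαM : 2 * α * M ≤ lam) (x : n → ℝ) :
    2 * α * A i i * x i - α ^ 2 * A i i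
      ≤ x ⬝ᵥ A *ᵥ x + lam * ∑ j ∈ Finset.univ.erase i, |x j| := by
  have hrow := A.mulVec_apply_eq_diag_add_sum_erase x i
  set E := ∑ j ∈ Finset.univ.erase i, A i j * x j
  have hQ : 2 * α * (A *ᵥ x) i - α ^ 2 * A i i ≤ x ⬝ᵥ A *ᵥ x := by
    refine le_of_mul_le_mul_left ?_ hAii
    nlinarith [hA.mulVec_apply_sq_le x i, sq_nonneg ((A *ᵥ x) i - α * A i i)]
  have hE : 2 * α * -E ≤ lam * ∑ j ∈ Finset.univ.erase i, |x j| :=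
    calc 2 * α * -E ≤ 2 * α * (M * ∑ j ∈ Finset.univ.erase i, |x j|) :=
          mul_le_mul_of_nonneg_left ((neg_le_abs E).trans (Finset.abs_sum_mul_le fun j _ => hM j))
            (by positivity)
      _ ≤ lam * ∑ j ∈ Finset.univ.erase i, |x j| := by
          rw [← mul_assoc]
          exact mul_le_mul_of_nonneg_right hαM (Finset.sum_nonneg fun j _ => abs_nonneg _)
  rw [hrow] at hQ
  linear_combination hQ + hE

end Matrix

/-- Linear lower bound for `h(x) = −log x_k + xᵀAx + λ Σ_{j<k} |x_j|` with `A` positive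
semidefinite, `A_{kk} > 0` and `λ > 0`: there exist `a₁, a₂ > 0` depending only on `λ`
and `A` with `h(x) ≥ a₁ x_k − a₂` whenever `x_k > 0`. -/
theorem neg_log_quadratic_l1_linear_lower_bound
    (k : ℕ) (A : Matrix (Fin (k + 1)) (Fin (k + 1)) ℝ)
    (hA : A.PosSemidef) (hAkk : 0 < A (Fin.last k) (Fin.last k))
    (lam : ℝ) (hlam : 0 < lam)
    (h : (Fin (k + 1) → ℝ) → ℝ)
    (hh : ∀ x, h x = -Real.log (x (Fin.last k)) + x ⬝ᵥ A.mulVec x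
        + lam * ∑ j ∈ Finset.univ.erase (Fin.last k), |x j|) :
    ∃ a₁ > (0 : ℝ), ∃ a₂ > (0 : ℝ), ∀ x : Fin (k + 1) → ℝ,
      0 < x (Fin.last k) → a₁ * x (Fin.last k) - a₂ ≤ h x := by
  set c := A (Fin.last k) (Fin.last k)
  set M := ∑ j, |A (Fin.last k) j|
  have hM : ∀ j, |A (Fin.last k) j| ≤ M := fun j =>
    Finset.single_le_sum (f := fun j => |A (Fin.last k) j|) (fun j _ => abs_nonneg _)
      (Finset.mem_univ j)
  have hMpos : 0 < M := hAkk.trans_le ((le_abs_self c).trans (hM _))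
  obtain ⟨α, hα, hαM⟩ : ∃ α > 0, 2 * α * M = lam := ⟨lam / (2 * M), by positivity, by field_simp⟩
  refine ⟨α * c, by positivity, α ^ 2 * c + |Real.log (α * c)|, by positivity, fun x hx => ?_⟩
  have hquad := hA.two_mul_diag_mul_sub_le hAkk hα.le hM hαM.le x
  have hlog := Real.log_add_one_sub_mul_le_neg_log (mul_pos hα hAkk) hx
  rw [hh]
  linarith [neg_abs_le (Real.log (α * c))]
end
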